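/- arXiv:2312.12847 — 3 statements merged into one kernel-verified Lean document; each statement's English description precedes it below -/
import Mathlib

section
/- Let 1 < q ≤ 2 be a real number and assume b^{q−1} < E[W^q] < ∞ (the supercritical case). Then the limit lim_{n→∞} (log E[Y_n^q])/n exists and equals log(E[W^q]/b^{q−1}). -/
open MeasureTheory ProbabilityTheory Filter

/-- The distribution of the totally critical random variable `W_TC`, which takes
the value `b` with probability `b⁻¹` and the value `0` with probability `1 - b⁻¹`. -/
noncomputable def WTCdist (b : ℕ) : Measure ℝ :=
  ((b : ENNReal)⁻¹) • Measure.dirac (b : ℝ) + (1 - (b : ENNReal)⁻¹) • Measure.dirac 0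

/-- The Mandelbrot cascade martingale
`Y_n = b^{-n} ∑_{|v| = n} ∏_{∅ ≺ u ⪯ v} W(u)` on the `b`-adic tree,
where words of length `n` are encoded as functions `Fin n → Fin b` and the
nonempty prefixes of such a word `v` are `(List.ofFn v).take (k+1)` for `k < n`. -/
noncomputable def badicY {Ω : Type*} (b : ℕ) (Wv : List (Fin b) → Ω → ℝ) (n : ℕ) (ω : Ω) : ℝ :=
  ((b : ℝ) ^ n)⁻¹ *
    ∑ v : Fin n → Fin b, ∏ k ∈ Finset.range n, Wv ((List.ofFn v).take (k + 1)) ω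

/-!
Splitting the tree at the root, `Y_{n+1} = ∑ᵢ Xᵢ` with `Xᵢ = b⁻¹ W([i]) Yᵢ`, where `Yᵢ` is the
depth-`n` cascade of the subtree below the letter `i`. The `Xᵢ` are nonnegative, pairwise
independent, of mean `b⁻¹`, and `E[Xᵢ^q] = b^{-q} E[W^q] E[Yᵢ^q]`. For `1 < q ≤ 2`,
`∑ᵢ xᵢ^q ≤ (∑ᵢ xᵢ)^q ≤ ∑ᵢ ∑ⱼ xᵢ xⱼ^(q-1)`, and independence turns the off-diagonal terms into a
bounded error. With `ρ = E[W^q] / b^(q-1)`, an induction on the depth (over all cascades at once,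
since the subtree cascades are cascades again) gives `ρ^n ≤ E[Y_n^q]` and
`(ρ - 1) E[Y_n^q] ≤ (ρ + b) ρ^n - (b + 1)`, so for `ρ > 1` the moment `E[Y_n^q]` is `ρ^n` up to
constant factors.
-/

open Topology

namespace Real

lemma rpow_eq_mul_rpow_sub_one {x q : ℝ} (hx : 0 ≤ x) (hq : q ≠ 0) : x ^ q = x * x ^ (q - 1) := by
  rw [← rpow_one_add' hx (by simpa using hq), add_sub_cancel]

lemma inv_rpow_mul_mul_self {x : ℝ} (hx : x ≠ 0) (a q : ℝ) :
    (x ^ q)⁻¹ * a * x = a / x ^ (q - 1) := by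
  rw [rpow_sub_one hx]
  field_simp

lemma rpow_le_one_add {x p : ℝ} (hx : 0 ≤ x) (hp0 : 0 ≤ p) (hp1 : p ≤ 1) : x ^ p ≤ 1 + x := by
  rcases le_total x 1 with h | h
  · linarith [rpow_le_one hx h hp0]
  · linarith [(rpow_le_rpow_of_exponent_le h hp1).trans_eq (rpow_one x)]

variable {ι : Type*} (s : Finset ι) {x : ι → ℝ}

lemma rpow_sum_le_sum_rpow (hx : ∀ i ∈ s, 0 ≤ x i) {p : ℝ} (hp0 : 0 < p) (hp1 : p ≤ 1) :
    (∑ i ∈ s, x i) ^ p ≤ ∑ i ∈ s, x i ^ p := by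
  induction s using Finset.cons_induction with
  | empty => simp [zero_rpow hp0.ne']
  | cons a s ha ih =>
    rw [Finset.forall_mem_cons] at hx
    rw [Finset.sum_cons, Finset.sum_cons]
    calc (x a + ∑ i ∈ s, x i) ^ p ≤ x a ^ p + (∑ i ∈ s, x i) ^ p :=
          rpow_add_le_add_rpow hx.1 (Finset.sum_nonneg hx.2) hp0.le hp1
      _ ≤ x a ^ p + ∑ i ∈ s, x i ^ p := by grw [ih hx.2]

lemma sum_rpow_le_rpow_sum (hx : ∀ i ∈ s, 0 ≤ x i) {q : ℝ} (hq : 1 ≤ q) :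
    ∑ i ∈ s, x i ^ q ≤ (∑ i ∈ s, x i) ^ q := by
  induction s using Finset.cons_induction with
  | empty => simp [zero_rpow (by positivity : q ≠ 0)]
  | cons a s ha ih =>
    rw [Finset.forall_mem_cons] at hx
    rw [Finset.sum_cons, Finset.sum_cons]
    calc x a ^ q + ∑ i ∈ s, x i ^ q ≤ x a ^ q + (∑ i ∈ s, x i) ^ q := by grw [ih hx.2]
      _ ≤ (x a + ∑ i ∈ s, x i) ^ q := add_rpow_le_rpow_add hx.1 (Finset.sum_nonneg hx.2) hq

lemma rpow_sum_le_sum_sum_mul_rpow_sub_one (hx : ∀ i ∈ s, 0 ≤ x i) {q : ℝ} (hq1 : 1 < q)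
    (hq2 : q ≤ 2) : (∑ i ∈ s, x i) ^ q ≤ ∑ i ∈ s, ∑ j ∈ s, x i * x j ^ (q - 1) := by
  have hs : 0 ≤ ∑ i ∈ s, x i := Finset.sum_nonneg hx
  calc (∑ i ∈ s, x i) ^ q = (∑ i ∈ s, x i) * (∑ i ∈ s, x i) ^ (q - 1) :=
        rpow_eq_mul_rpow_sub_one hs (by linarith)
    _ ≤ (∑ i ∈ s, x i) * ∑ j ∈ s, x j ^ (q - 1) := by
        gcongr; exact rpow_sum_le_sum_rpow s hx (by linarith) (by linarith)
    _ = ∑ i ∈ s, ∑ j ∈ s, x i * x j ^ (q - 1) := Finset.sum_mul_sum _ _ _ _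

end Real

lemma tendsto_log_div_of_pow_le_of_le_mul_pow {a : ℕ → ℝ} {ρ C : ℝ} (hρ : 0 < ρ)
    (hlow : ∀ n, ρ ^ n ≤ a n) (hup : ∀ n, a n ≤ C * ρ ^ n) :
    Tendsto (fun n : ℕ => Real.log (a n) / n) atTop (𝓝 (Real.log ρ)) := by
  have hC : 0 < C := zero_lt_one.trans_le (by simpa using (hlow 0).trans (hup 0))
  have hC' : Tendsto (fun n : ℕ => Real.log C / n + Real.log ρ) atTop (𝓝 (Real.log ρ)) := by
    simpa using (tendsto_const_div_atTop_nhds_zero_nat (Real.log C)).add_const (Real.log ρ)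
  refine tendsto_of_tendsto_of_tendsto_of_le_of_le' tendsto_const_nhds hC' ?_ ?_ <;>
    filter_upwards [eventually_gt_atTop 0] with n hn <;>
    have hn' : (0 : ℝ) < n := by exact_mod_cast hn
  · rw [le_div_iff₀ hn', mul_comm, ← Real.log_pow]
    exact Real.log_le_log (by positivity) (hlow n)
  · rw [div_add' _ _ _ hn'.ne', div_le_div_iff_of_pos_right hn', mul_comm, ← Real.log_pow,
      ← Real.log_mul hC.ne' (by positivity)]
    exact Real.log_le_log ((pow_pos hρ n).trans_le (hlow n)) (hup n)

section Moments

variable {Ω ι : Type*} [MeasurableSpace Ω] {μ : Measure Ω} {p q : ℝ} {f g : Ω → ℝ}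

lemma integrable_rpow_of_le_one [IsFiniteMeasure μ] (hf0 : 0 ≤ᵐ[μ] f) (hf : Integrable f μ)
    (hp0 : 0 ≤ p) (hp1 : p ≤ 1) : Integrable (fun ω => f ω ^ p) μ := by
  refine ((integrable_const 1).add hf).mono' (hf.aemeasurable.pow_const p).aestronglyMeasurable ?_
  filter_upwards [hf0] with ω hω
  rw [Real.norm_of_nonneg (Real.rpow_nonneg hω p)]
  exact Real.rpow_le_one_add hω hp0 hp1

lemma integral_rpow_le_one_add_integral [IsProbabilityMeasure μ] (hf0 : 0 ≤ᵐ[μ] f)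
    (hf : Integrable f μ) (hp0 : 0 ≤ p) (hp1 : p ≤ 1) :
    ∫ ω, f ω ^ p ∂μ ≤ 1 + ∫ ω, f ω ∂μ := by
  calc ∫ ω, f ω ^ p ∂μ ≤ ∫ ω, (1 + f ω) ∂μ := by
        refine integral_mono_ae (integrable_rpow_of_le_one hf0 hf hp0 hp1)
          ((integrable_const 1).add hf) ?_
        filter_upwards [hf0] with ω hω using Real.rpow_le_one_add hω hp0 hp1
    _ = 1 + ∫ ω, f ω ∂μ := by simp [integral_add (integrable_const 1) hf]

namespace ProbabilityTheory.IndepFun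

lemma integrable_mul_rpow [IsFiniteMeasure μ] (hfg : IndepFun f g μ) (hf : Integrable f μ)
    (hg0 : 0 ≤ᵐ[μ] g) (hg : Integrable g μ) (hp0 : 0 ≤ p) (hp1 : p ≤ 1) :
    Integrable (fun ω => f ω * g ω ^ p) μ :=
  (hfg.comp measurable_id (measurable_id.pow_const p)).integrable_mul hf
    (integrable_rpow_of_le_one hg0 hg hp0 hp1)

lemma integral_mul_rpow_le [IsProbabilityMeasure μ] (hfg : IndepFun f g μ) (hf0 : 0 ≤ᵐ[μ] f)
    (hf : AEStronglyMeasurable f μ) (hg0 : 0 ≤ᵐ[μ] g) (hg : Integrable g μ) (hp0 : 0 ≤ p)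
    (hp1 : p ≤ 1) : ∫ ω, f ω * g ω ^ p ∂μ ≤ (∫ ω, f ω ∂μ) * (1 + ∫ ω, g ω ∂μ) := by
  have hfgp := (hfg.comp measurable_id (measurable_id.pow_const p)).integral_mul_eq_mul_integral
    hf (hg.aemeasurable.pow_const p).aestronglyMeasurable
  simp only [Pi.mul_apply, Function.comp_apply, id] at hfgp
  rw [hfgp]
  exact mul_le_mul_of_nonneg_left (integral_rpow_le_one_add_integral hg0 hg hp0 hp1)
    (integral_nonneg_of_ae hf0)

end ProbabilityTheory.IndepFun

variable [Fintype ι] {X : ι → Ω → ℝ}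

lemma integrable_rpow_sum (hq : 1 ≤ q) (hXm : ∀ i, AEMeasurable (X i) μ)
    (hX0 : ∀ i, 0 ≤ᵐ[μ] X i) (hXq : ∀ i, Integrable (fun ω => X i ω ^ q) μ) :
    Integrable (fun ω => (∑ i, X i ω) ^ q) μ := by
  refine ((integrable_finsetSum Finset.univ fun i _ => hXq i).const_mul
    (((Finset.univ : Finset ι).card : ℝ) ^ (q - 1))).mono'
    ((Finset.aemeasurable_fun_sum _ fun i _ => hXm i).pow_const q).aestronglyMeasurable ?_
  filter_upwards [ae_all_iff.2 hX0] with ω hω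
  rw [Real.norm_of_nonneg (Real.rpow_nonneg (Finset.sum_nonneg fun i _ => hω i) q)]
  exact Real.rpow_sum_le_const_mul_sum_rpow_of_nonneg _ hq fun i _ => hω i

lemma sum_integral_rpow_le_integral_rpow_sum (hq : 1 ≤ q) (hXm : ∀ i, AEMeasurable (X i) μ)
    (hX0 : ∀ i, 0 ≤ᵐ[μ] X i) (hXq : ∀ i, Integrable (fun ω => X i ω ^ q) μ) :
    ∑ i, ∫ ω, X i ω ^ q ∂μ ≤ ∫ ω, (∑ i, X i ω) ^ q ∂μ := by
  rw [← integral_finsetSum _ fun i _ => hXq i]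
  refine integral_mono_ae (integrable_finsetSum _ fun i _ => hXq i)
    (integrable_rpow_sum hq hXm hX0 hXq) ?_
  filter_upwards [ae_all_iff.2 hX0] with ω hω
  exact Real.sum_rpow_le_rpow_sum _ (fun i _ => hω i) hq

lemma integral_rpow_sum_le [IsProbabilityMeasure μ] (hq1 : 1 < q) (hq2 : q ≤ 2)
    (hX : ∀ i, Integrable (X i) μ) (hX0 : ∀ i, 0 ≤ᵐ[μ] X i)
    (hXq : ∀ i, Integrable (fun ω => X i ω ^ q) μ)
    (hindep : Pairwise fun i j => IndepFun (X i) (X j) μ) :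
    ∫ ω, (∑ i, X i ω) ^ q ∂μ ≤
      ∑ i, ∫ ω, X i ω ^ q ∂μ + ∑ i, ∑ j, (∫ ω, X i ω ∂μ) * (1 + ∫ ω, X j ω ∂μ) := by
  classical
  have hp0 : 0 ≤ q - 1 := by linarith
  have hp1 : q - 1 ≤ 1 := by linarith
  have hdiag : ∀ i, (fun ω => X i ω * X i ω ^ (q - 1)) =ᵐ[μ] fun ω => X i ω ^ q := fun i => by
    filter_upwards [hX0 i] with ω hω using (Real.rpow_eq_mul_rpow_sub_one hω (by linarith)).symm
  have hint : ∀ i j, Integrable (fun ω => X i ω * X j ω ^ (q - 1)) μ := by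
    intro i j
    rcases eq_or_ne i j with rfl | hij
    · exact (hXq i).congr (hdiag i).symm
    · exact (hindep hij).integrable_mul_rpow (hX i) (hX0 j) (hX j) hp0 hp1
  have hcross : ∀ i j, ∫ ω, X i ω * X j ω ^ (q - 1) ∂μ ≤
      (if i = j then ∫ ω, X i ω ^ q ∂μ else 0) + (∫ ω, X i ω ∂μ) * (1 + ∫ ω, X j ω ∂μ) := by
    intro i j
    rcases eq_or_ne i j with rfl | hij
    · have hm := integral_nonneg_of_ae (hX0 i)
      rw [if_pos rfl, integral_congr_ae (hdiag i)]
      exact le_add_of_nonneg_right (mul_nonneg hm (by linarith))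
    · rw [if_neg hij, zero_add]
      exact (hindep hij).integral_mul_rpow_le (hX0 i) (hX i).aestronglyMeasurable (hX0 j) (hX j)
        hp0 hp1
  calc ∫ ω, (∑ i, X i ω) ^ q ∂μ ≤ ∫ ω, ∑ i, ∑ j, X i ω * X j ω ^ (q - 1) ∂μ := by
        refine integral_mono_ae (integrable_rpow_sum hq1.le (fun i => (hX i).aemeasurable) hX0 hXq)
          (integrable_finsetSum _ fun i _ => integrable_finsetSum _ fun j _ => hint i j) ?_
        filter_upwards [ae_all_iff.2 hX0] with ω hω
        exact Real.rpow_sum_le_sum_sum_mul_rpow_sub_one _ (fun i _ => hω i) hq1 hq2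
    _ = ∑ i, ∑ j, ∫ ω, X i ω * X j ω ^ (q - 1) ∂μ := by
        rw [integral_finsetSum _ fun i _ => integrable_finsetSum _ fun j _ => hint i j]
        exact Finset.sum_congr rfl fun i _ => integral_finsetSum _ fun j _ => hint i j
    _ ≤ ∑ i, ∑ j, ((if i = j then ∫ ω, X i ω ^ q ∂μ else 0) +
          (∫ ω, X i ω ∂μ) * (1 + ∫ ω, X j ω ∂μ)) := by gcongr with i _ j _; exact hcross i j
    _ = _ := by simp only [Finset.sum_add_distrib, Finset.sum_ite_eq, Finset.mem_univ, if_true]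

end Moments

lemma ProbabilityTheory.iIndepFun.indepFun_of_measurable_iSup {Ω ι β γ δ : Type*}
    {_ : MeasurableSpace Ω} {μ : Measure Ω} [mβ : MeasurableSpace β] [MeasurableSpace γ]
    [MeasurableSpace δ] {f : ι → Ω → β} (hf : iIndepFun f μ) (hfm : ∀ i, Measurable (f i))
    {S T : Set ι} (hST : Disjoint S T) {g : Ω → γ} {h : Ω → δ}
    (hg : Measurable[⨆ i ∈ S, mβ.comap (f i)] g) (hh : Measurable[⨆ i ∈ T, mβ.comap (f i)] h) :
    IndepFun g h μ := by
  rw [IndepFun_iff_Indep]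
  exact indep_of_indep_of_le_left (indep_of_indep_of_le_right
    (indep_iSup_of_disjoint (fun i => (hfm i).comap_le) hf hST) hh.comap_le) hg.comap_le

lemma measurable_iSup_comap_of_mem {Ω ι β : Type*} [mβ : MeasurableSpace β] {f : ι → Ω → β}
    {S : Set ι} {i : ι} (hi : i ∈ S) : Measurable[⨆ j ∈ S, mβ.comap (f j)] (f i) :=
  (comap_measurable (f i)).mono (le_iSup₂ (f := fun j (_ : j ∈ S) => mβ.comap (f j)) i hi) le_rfl

lemma List.take_succ_ofFn_ne_nil {α : Type*} {n k : ℕ} (v : Fin n → α) (hk : k < n) :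
    (List.ofFn v).take (k + 1) ≠ [] := by
  simpa using Nat.ne_zero_of_lt hk

section Cascade

variable {Ω : Type*} {b n : ℕ} {Wv : List (Fin b) → Ω → ℝ}

lemma badicY_zero : badicY b Wv 0 = 1 := by
  funext ω
  simp [badicY]

noncomputable def badicBranch (b : ℕ) (Wv : List (Fin b) → Ω → ℝ) (n : ℕ) (i : Fin b) (ω : Ω) :
    ℝ :=
  (b : ℝ)⁻¹ * (Wv [i] ω * badicY b (fun v => Wv (i :: v)) n ω)

lemma badicY_succ : badicY b Wv (n + 1) = fun ω => ∑ i, badicBranch b Wv n i ω := by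
  funext ω
  rw [badicY, ← (Fin.consEquiv fun _ => Fin b).sum_comp (M := ℝ), Fintype.sum_prod_type,
    Finset.mul_sum]
  refine Finset.sum_congr rfl fun i _ => ?_
  simp only [badicBranch, badicY, Finset.mul_sum]
  refine Finset.sum_congr rfl fun v _ => ?_
  rw [show Fin.consEquiv (fun _ => Fin b) (i, v) = Fin.cons i v from rfl, List.ofFn_cons,
    Finset.prod_range_succ']
  simp only [List.take_succ_cons, List.take_zero, pow_succ, mul_inv]
  ring

lemma measurable_badicY {m : MeasurableSpace Ω} (h : ∀ v ≠ [], Measurable[m] (Wv v)) :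
    Measurable[m] (badicY b Wv n) :=
  Measurable.const_mul (Finset.measurable_sum _ fun _ _ => Finset.measurable_prod _ fun _ hk =>
    h _ (List.take_succ_ofFn_ne_nil _ (Finset.mem_range.1 hk))) _

lemma measurable_badicBranch {m : MeasurableSpace Ω} {i : Fin b}
    (h : ∀ v, Measurable[m] (Wv (i :: v))) : Measurable[m] (badicBranch b Wv n i) :=
  ((h []).mul (measurable_badicY fun v _ => h v)).const_mul _

lemma badicY_nonneg {ω : Ω} (h : ∀ v ≠ [], 0 ≤ Wv v ω) : 0 ≤ badicY b Wv n ω :=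
  mul_nonneg (by positivity) (Finset.sum_nonneg fun _ _ =>
    Finset.prod_nonneg fun _ hk => h _ (List.take_succ_ofFn_ne_nil _ (Finset.mem_range.1 hk)))

lemma badicBranch_nonneg {ω : Ω} {i : Fin b} (h : ∀ v ≠ [], 0 ≤ Wv v ω) :
    0 ≤ badicBranch b Wv n i ω :=
  mul_nonneg (by positivity) (mul_nonneg (h _ (by simp)) (badicY_nonneg fun v _ => h _ (by simp)))

end Cascade

structure IsCascadeWeights {Ω : Type*} [MeasurableSpace Ω] {b : ℕ} (μ : Measure Ω) (W : Ω → ℝ)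
    (Wv : List (Fin b) → Ω → ℝ) : Prop where
  measurable : ∀ v ≠ [], Measurable (Wv v)
  iIndepFun : iIndepFun (fun v : {v : List (Fin b) // v ≠ []} => Wv v.1) μ
  identDistrib : ∀ v ≠ [], IdentDistrib (Wv v) W μ μ

namespace IsCascadeWeights

variable {Ω : Type*} [MeasurableSpace Ω] {μ : Measure Ω} {b n : ℕ} {W : Ω → ℝ}
  {Wv : List (Fin b) → Ω → ℝ} {q : ℝ} (h : IsCascadeWeights μ W Wv)
include h

lemma subtree (i : Fin b) : IsCascadeWeights μ W (fun v => Wv (i :: v)) where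
  measurable _ _ := h.measurable _ (List.cons_ne_nil _ _)
  iIndepFun := h.iIndepFun.precomp (g := fun v => ⟨i :: v.1, List.cons_ne_nil _ _⟩)
    fun _ _ hvw => Subtype.ext (List.cons_injective (congrArg Subtype.val hvw))
  identDistrib _ _ := h.identDistrib _ (List.cons_ne_nil _ _)

lemma ae_nonneg (hW0 : ∀ᵐ ω ∂μ, 0 ≤ W ω) : ∀ᵐ ω ∂μ, ∀ v ≠ [], 0 ≤ Wv v ω := by
  have hv (v : {v : List (Fin b) // v ≠ []}) : ∀ᵐ ω ∂μ, 0 ≤ Wv v.1 ω :=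
    (h.identDistrib v.1 v.2).symm.ae_snd measurableSet_Ici hW0
  filter_upwards [ae_all_iff.2 hv] with ω hω v hv using hω ⟨v, hv⟩

lemma indepFun_head_badicY (i : Fin b) :
    IndepFun (Wv [i]) (badicY b (fun v => Wv (i :: v)) n) μ := by
  have hdisj : Disjoint {v : {v : List (Fin b) // v ≠ []} | v.1 = [i]}
      {v | ∃ u ≠ [], v.1 = i :: u} :=
    Set.disjoint_left.2 fun v (hv : v.1 = [i]) ⟨u, hu, hvu⟩ =>
      hu (List.cons.inj (hv.symm.trans hvu)).2.symm
  refine h.iIndepFun.indepFun_of_measurable_iSup (fun v => h.measurable v.1 v.2) hdisj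
    (measurable_iSup_comap_of_mem (f := fun v : {v : List (Fin b) // v ≠ []} => Wv v.1)
      (i := ⟨[i], List.cons_ne_nil _ _⟩) rfl)
    (measurable_badicY fun u hu => measurable_iSup_comap_of_mem
      (f := fun v : {v : List (Fin b) // v ≠ []} => Wv v.1)
      (i := ⟨i :: u, List.cons_ne_nil _ _⟩) ⟨u, hu, rfl⟩)

lemma indepFun_badicBranch {i j : Fin b} (hij : i ≠ j) :
    IndepFun (badicBranch b Wv n i) (badicBranch b Wv n j) μ := by
  have hdisj : Disjoint {v : {v : List (Fin b) // v ≠ []} | v.1.head? = some i}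
      {v | v.1.head? = some j} :=
    Set.disjoint_left.2 fun v hvi hvj => hij (Option.some_injective _ (hvi.symm.trans hvj))
  refine h.iIndepFun.indepFun_of_measurable_iSup (fun v => h.measurable v.1 v.2) hdisj
    (measurable_badicBranch fun u => measurable_iSup_comap_of_mem
      (f := fun v : {v : List (Fin b) // v ≠ []} => Wv v.1)
      (i := ⟨i :: u, List.cons_ne_nil _ _⟩) rfl)
    (measurable_badicBranch fun u => measurable_iSup_comap_of_mem
      (f := fun v : {v : List (Fin b) // v ≠ []} => Wv v.1)
      (i := ⟨j :: u, List.cons_ne_nil _ _⟩) rfl)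

lemma measurable_badicY : Measurable (badicY b Wv n) :=
  _root_.measurable_badicY h.measurable

lemma measurable_badicBranch {i : Fin b} : Measurable (badicBranch b Wv n i) :=
  _root_.measurable_badicBranch fun _ => h.measurable _ (List.cons_ne_nil _ _)

lemma ae_nonneg_badicBranch (hW0 : ∀ᵐ ω ∂μ, 0 ≤ W ω) (i : Fin b) :
    0 ≤ᵐ[μ] badicBranch b Wv n i := by
  filter_upwards [h.ae_nonneg hW0] with ω hω using badicBranch_nonneg hω

lemma integrable_badicBranch [IsFiniteMeasure μ] (hW : Integrable W μ) {i : Fin b}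
    (hY : Integrable (badicY b (fun v => Wv (i :: v)) n) μ) :
    Integrable (badicBranch b Wv n i) μ :=
  ((h.indepFun_head_badicY i).integrable_mul
    ((h.identDistrib [i] (List.cons_ne_nil _ _)).integrable_iff.2 hW) hY).const_mul _

lemma integrable_badicY [IsFiniteMeasure μ] (hW : Integrable W μ) :
    Integrable (badicY b Wv n) μ := by
  induction n generalizing Wv with
  | zero => rw [badicY_zero]; exact integrable_const 1
  | succ n ih =>
    rw [badicY_succ]
    exact integrable_finsetSum _ fun i _ => h.integrable_badicBranch hW (ih (h.subtree i))

lemma integral_badicBranch (i : Fin b) :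
    ∫ ω, badicBranch b Wv n i ω ∂μ =
      (b : ℝ)⁻¹ * ((∫ ω, W ω ∂μ) * ∫ ω, badicY b (fun v => Wv (i :: v)) n ω ∂μ) := by
  have hmul := (h.indepFun_head_badicY (n := n) i).integral_mul_eq_mul_integral
    (h.measurable [i] (List.cons_ne_nil _ _)).aestronglyMeasurable
    (h.subtree i).measurable_badicY.aestronglyMeasurable
  simp only [Pi.mul_apply] at hmul
  rw [← (h.identDistrib [i] (List.cons_ne_nil _ _)).integral_eq, ← hmul, ← integral_const_mul]
  rfl

lemma integral_badicY [IsProbabilityMeasure μ] (hb : b ≠ 0) (hWmean : ∫ ω, W ω ∂μ = 1) :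
    ∫ ω, badicY b Wv n ω ∂μ = 1 := by
  induction n generalizing Wv with
  | zero => simp [badicY_zero]
  | succ n ih =>
    have hW : Integrable W μ := .of_integral_ne_zero (by simp [hWmean])
    rw [badicY_succ, integral_finsetSum _ fun i _ =>
      h.integrable_badicBranch hW ((h.subtree i).integrable_badicY hW)]
    simp [h.integral_badicBranch, hWmean, fun i => ih (h.subtree i), hb]

lemma rpow_badicBranch_ae_eq (hW0 : ∀ᵐ ω ∂μ, 0 ≤ W ω) (q : ℝ) (i : Fin b) :
    (fun ω => badicBranch b Wv n i ω ^ q) =ᵐ[μ] fun ω =>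
      ((b : ℝ) ^ q)⁻¹ * (Wv [i] ω ^ q * badicY b (fun v => Wv (i :: v)) n ω ^ q) := by
  filter_upwards [h.ae_nonneg hW0] with ω hω
  have hWi := hω [i] (List.cons_ne_nil _ _)
  have hY := badicY_nonneg (n := n) fun v (_ : v ≠ []) => hω (i :: v) (List.cons_ne_nil _ _)
  rw [badicBranch, Real.mul_rpow (by positivity) (mul_nonneg hWi hY), Real.mul_rpow hWi hY,
    Real.inv_rpow (Nat.cast_nonneg b)]

lemma identDistrib_rpow {v : List (Fin b)} (hv : v ≠ []) (q : ℝ) :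
    IdentDistrib (fun ω => Wv v ω ^ q) (fun ω => W ω ^ q) μ μ :=
  (h.identDistrib v hv).comp (measurable_id.pow_const q)

lemma indepFun_rpow_head_badicY (q : ℝ) (i : Fin b) :
    IndepFun (fun ω => Wv [i] ω ^ q) (fun ω => badicY b (fun v => Wv (i :: v)) n ω ^ q) μ :=
  (h.indepFun_head_badicY i).comp (measurable_id.pow_const q) (measurable_id.pow_const q)

lemma integrable_rpow_badicBranch [IsFiniteMeasure μ] (hW0 : ∀ᵐ ω ∂μ, 0 ≤ W ω)
    (hWq : Integrable (fun ω => W ω ^ q) μ) {i : Fin b}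
    (hYq : Integrable (fun ω => badicY b (fun v => Wv (i :: v)) n ω ^ q) μ) :
    Integrable (fun ω => badicBranch b Wv n i ω ^ q) μ := by
  have hWiq := (h.identDistrib_rpow (List.cons_ne_nil i []) q).integrable_iff.2 hWq
  exact (((h.indepFun_rpow_head_badicY q i).integrable_mul hWiq hYq).const_mul _).congr
    (h.rpow_badicBranch_ae_eq hW0 q i).symm

lemma integral_rpow_badicBranch (hW0 : ∀ᵐ ω ∂μ, 0 ≤ W ω) (q : ℝ) (i : Fin b) :
    ∫ ω, badicBranch b Wv n i ω ^ q ∂μ = ((b : ℝ) ^ q)⁻¹ * (∫ ω, W ω ^ q ∂μ) *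
      ∫ ω, badicY b (fun v => Wv (i :: v)) n ω ^ q ∂μ := by
  have hmul := (h.indepFun_rpow_head_badicY (n := n) q i).integral_mul_eq_mul_integral
    ((h.measurable [i] (List.cons_ne_nil _ _)).pow_const q).aestronglyMeasurable
    ((h.subtree i).measurable_badicY.pow_const q).aestronglyMeasurable
  simp only [Pi.mul_apply] at hmul
  rw [integral_congr_ae (h.rpow_badicBranch_ae_eq hW0 q i), integral_const_mul, hmul, mul_assoc,
    (h.identDistrib_rpow (List.cons_ne_nil i []) q).integral_eq]

lemma integrable_rpow_badicY [IsFiniteMeasure μ] (hq : 1 ≤ q) (hW0 : ∀ᵐ ω ∂μ, 0 ≤ W ω)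
    (hWq : Integrable (fun ω => W ω ^ q) μ) :
    Integrable (fun ω => badicY b Wv n ω ^ q) μ := by
  induction n generalizing Wv with
  | zero => simp [badicY_zero]
  | succ n ih =>
    rw [badicY_succ]
    exact integrable_rpow_sum hq (fun _ => h.measurable_badicBranch.aemeasurable)
      (h.ae_nonneg_badicBranch hW0) fun i =>
        h.integrable_rpow_badicBranch hW0 hWq (ih (h.subtree i))

lemma le_integral_rpow_badicY_succ [IsFiniteMeasure μ] (hq : 1 ≤ q) (hW0 : ∀ᵐ ω ∂μ, 0 ≤ W ω)
    (hWq : Integrable (fun ω => W ω ^ q) μ) :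
    ((b : ℝ) ^ q)⁻¹ * (∫ ω, W ω ^ q ∂μ) * ∑ i, ∫ ω, badicY b (fun v => Wv (i :: v)) n ω ^ q ∂μ ≤
      ∫ ω, badicY b Wv (n + 1) ω ^ q ∂μ := by
  rw [badicY_succ, Finset.mul_sum]
  simp only [← h.integral_rpow_badicBranch hW0]
  exact sum_integral_rpow_le_integral_rpow_sum hq (fun _ => h.measurable_badicBranch.aemeasurable)
    (h.ae_nonneg_badicBranch hW0) fun i =>
      h.integrable_rpow_badicBranch hW0 hWq ((h.subtree i).integrable_rpow_badicY hq hW0 hWq)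

lemma integral_rpow_badicY_succ_le [IsProbabilityMeasure μ] (hb : b ≠ 0) (hq1 : 1 < q)
    (hq2 : q ≤ 2) (hW0 : ∀ᵐ ω ∂μ, 0 ≤ W ω) (hWmean : ∫ ω, W ω ∂μ = 1)
    (hWq : Integrable (fun ω => W ω ^ q) μ) :
    ∫ ω, badicY b Wv (n + 1) ω ^ q ∂μ ≤ ((b : ℝ) ^ q)⁻¹ * (∫ ω, W ω ^ q ∂μ) *
      ∑ i, ∫ ω, badicY b (fun v => Wv (i :: v)) n ω ^ q ∂μ + (b + 1) := by
  have hW : Integrable W μ := .of_integral_ne_zero (by simp [hWmean])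
  have hmean (i : Fin b) : ∫ ω, badicBranch b Wv n i ω ∂μ = (b : ℝ)⁻¹ := by
    rw [h.integral_badicBranch, hWmean, (h.subtree i).integral_badicY hb hWmean, mul_one, mul_one]
  rw [badicY_succ]
  refine (integral_rpow_sum_le hq1 hq2
    (fun i => h.integrable_badicBranch hW ((h.subtree i).integrable_badicY hW))
    (h.ae_nonneg_badicBranch hW0)
    (fun i => h.integrable_rpow_badicBranch hW0 hWq
      ((h.subtree i).integrable_rpow_badicY hq1.le hW0 hWq))
    fun i j hij => h.indepFun_badicBranch hij).trans_eq ?_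
  simp only [hmean, h.integral_rpow_badicBranch hW0, Finset.mul_sum, Finset.sum_const,
    Finset.card_univ, Fintype.card_fin, nsmul_eq_mul]
  field_simp

lemma pow_le_integral_rpow_badicY [IsProbabilityMeasure μ] (hb : b ≠ 0) (hq : 1 ≤ q)
    (hW0 : ∀ᵐ ω ∂μ, 0 ≤ W ω) (hWq : Integrable (fun ω => W ω ^ q) μ) {ρ : ℝ}
    (hρ : ρ = (∫ ω, W ω ^ q ∂μ) / (b : ℝ) ^ (q - 1)) :
    ρ ^ n ≤ ∫ ω, badicY b Wv n ω ^ q ∂μ := by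
  induction n generalizing Wv with
  | zero => simp [badicY_zero]
  | succ n ih =>
    set κ := ((b : ℝ) ^ q)⁻¹ * ∫ ω, W ω ^ q ∂μ
    have hκ0 : 0 ≤ κ := mul_nonneg (by positivity)
      (integral_nonneg_of_ae (hW0.mono fun ω hω => Real.rpow_nonneg hω q))
    have hκ : κ * b = ρ := (Real.inv_rpow_mul_mul_self (Nat.cast_ne_zero.2 hb) _ q).trans hρ.symm
    calc ρ ^ (n + 1) = κ * ∑ _i : Fin b, ρ ^ n := by
          rw [Finset.sum_const, Finset.card_univ, Fintype.card_fin, nsmul_eq_mul]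
          linear_combination -ρ ^ n * hκ
      _ ≤ κ * ∑ i, ∫ ω, badicY b (fun v => Wv (i :: v)) n ω ^ q ∂μ := by
          gcongr with i; exact ih (h.subtree i)
      _ ≤ ∫ ω, badicY b Wv (n + 1) ω ^ q ∂μ := h.le_integral_rpow_badicY_succ hq hW0 hWq

lemma integral_rpow_badicY_le [IsProbabilityMeasure μ] (hb : b ≠ 0) (hq1 : 1 < q) (hq2 : q ≤ 2)
    (hW0 : ∀ᵐ ω ∂μ, 0 ≤ W ω) (hWmean : ∫ ω, W ω ∂μ = 1) (hWq : Integrable (fun ω => W ω ^ q) μ)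
    {ρ : ℝ} (hρ : ρ = (∫ ω, W ω ^ q ∂μ) / (b : ℝ) ^ (q - 1)) (hρ1 : 1 ≤ ρ) :
    (ρ - 1) * ∫ ω, badicY b Wv n ω ^ q ∂μ ≤ (ρ + b) * ρ ^ n - (b + 1) := by
  induction n generalizing Wv with
  | zero => simp [badicY_zero]; linarith
  | succ n ih =>
    set κ := ((b : ℝ) ^ q)⁻¹ * ∫ ω, W ω ^ q ∂μ
    have hκ0 : 0 ≤ κ := mul_nonneg (by positivity)
      (integral_nonneg_of_ae (hW0.mono fun ω hω => Real.rpow_nonneg hω q))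
    have hκ : κ * b = ρ := (Real.inv_rpow_mul_mul_self (Nat.cast_ne_zero.2 hb) _ q).trans hρ.symm
    calc (ρ - 1) * ∫ ω, badicY b Wv (n + 1) ω ^ q ∂μ
        ≤ (ρ - 1) * (κ * ∑ i, ∫ ω, badicY b (fun v => Wv (i :: v)) n ω ^ q ∂μ + (b + 1)) := by
          gcongr
          exact h.integral_rpow_badicY_succ_le hb hq1 hq2 hW0 hWmean hWq
      _ = κ * ∑ i, (ρ - 1) * ∫ ω, badicY b (fun v => Wv (i :: v)) n ω ^ q ∂μ +
          (ρ - 1) * (b + 1) := by rw [← Finset.mul_sum]; ring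
      _ ≤ κ * ∑ _i : Fin b, ((ρ + b) * ρ ^ n - (b + 1)) + (ρ - 1) * (b + 1) := by
          gcongr with i; exact ih (h.subtree i)
      _ = (ρ + b) * ρ ^ (n + 1) - (b + 1) := by
          rw [Finset.sum_const, Finset.card_univ, Fintype.card_fin, nsmul_eq_mul]
          linear_combination ((ρ + b) * ρ ^ n - (b + 1)) * hκ

end IsCascadeWeights

/-- Proposition 1.4 (2), the supercritical case for `1 < q ≤ 2`: if
`b^{q-1} < E[W^q] < ∞`, then `log E[Y_n^q] / n → log (E[W^q] / b^{q-1})`. -/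
theorem moments_of_cascade_supercritical_limit
    {Ω : Type*} [MeasureSpace Ω] [IsProbabilityMeasure (ℙ : Measure Ω)]
    (b : ℕ) (hb : 2 ≤ b)
    (W : Ω → ℝ) (hWmeas : Measurable W) (hW0 : ∀ ω, 0 ≤ W ω)
    (hWmean : ∫ ω, W ω ∂ℙ = 1)
    (Wv : List (Fin b) → Ω → ℝ)
    (hmeas : ∀ v, Measurable (Wv v))
    (hindep : iIndepFun
      (fun v : {v : List (Fin b) // v ≠ []} => Wv v.1) ℙ)
    (hdist : ∀ v : List (Fin b), v ≠ [] → Measure.map (Wv v) ℙ = Measure.map W ℙ)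
    (q : ℝ) (hq1 : 1 < q) (hq2 : q ≤ 2)
    (hWq : Integrable (fun ω => W ω ^ q) ℙ)
    (hsup : (b : ℝ) ^ (q - 1) < ∫ ω, W ω ^ q ∂ℙ) :
    Tendsto (fun n : ℕ => Real.log (∫ ω, badicY b Wv n ω ^ q ∂ℙ) / n) atTop
      (nhds (Real.log ((∫ ω, W ω ^ q ∂ℙ) / (b : ℝ) ^ (q - 1)))) := by
  have hcasc : IsCascadeWeights ℙ W Wv := ⟨fun v _ => hmeas v, hindep,
    fun v hv => ⟨(hmeas v).aemeasurable, hWmeas.aemeasurable, hdist v hv⟩⟩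
  have hb0 : b ≠ 0 := by omega
  have hW0' : ∀ᵐ ω ∂ℙ, 0 ≤ W ω := ae_of_all _ hW0
  set ρ := (∫ ω, W ω ^ q ∂ℙ) / (b : ℝ) ^ (q - 1) with hρ
  have hρ1 : 1 < ρ := (one_lt_div (Real.rpow_pos_of_pos (by positivity) _)).2 hsup
  refine tendsto_log_div_of_pow_le_of_le_mul_pow (C := (ρ + b) / (ρ - 1)) (by linarith)
    (fun n => hcasc.pow_le_integral_rpow_badicY hb0 hq1.le hW0' hWq hρ) fun n => ?_
  rw [div_mul_eq_mul_div, le_div_iff₀ (by linarith), mul_comm]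
  linarith [hcasc.integral_rpow_badicY_le (n := n) hb0 hq1 hq2 hW0' hWmean hWq hρ hρ1.le]
end

section
/- Let T be a rooted tree, α a finitely supported weight on T, and X a nonnegative random variable with E[X²] < ∞. Then the conditional square function of M = Θ_T(X, α) is again a weighted sum on T: almost surely s(M)² = Θ_T(X², β), where β is the new weight associated to (T, α, X). -/
open MeasureTheory ProbabilityTheory Filter
open scoped Classical

/-- The weighted sum `Θ_T(X, α) = ∑_{v ∈ T} α(v) ∏_{u ⪯ v} X(u)` on a rooted tree `T`
(a prefix-closed set of finite words over `ℕ`), where `{Xv v}` are the random variables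
attached to the vertices (with `Xv ρ ≡ 1` at the root `ρ = []`); the product over the
prefixes `u ⪯ v` with `X(ρ) = 1` is `∏_{k < |v|} Xv (v.take (k+1))`. -/
noncomputable def treeSum {Ω : Type*} (T : Set (List ℕ)) (Xv : List ℕ → Ω → ℝ)
    (α : List ℕ → ℝ) (ω : Ω) : ℝ :=
  ∑ᶠ v ∈ T, α v * ∏ k ∈ Finset.range v.length, Xv (v.take (k + 1)) ω

/-- The new weight `β` associated to `(T, α, X)`, where `μ = E[X]` and `σ2 = Var(X)`:
`β(ρ) = (∑_{x∈T} α(x) μ^{d(x,ρ)})² + σ2 ∑_{x∈C(ρ)} (∑_{y∈T(x)} α(y) μ^{d(x,y)})²` and,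
for `v ≠ ρ`, `β(v) = σ2 ∑_{x∈C(v)} (∑_{y∈T(x)} α(y) μ^{d(x,y)})²` (and `β = 0` off `T`). -/
noncomputable def newWeight (T : Set (List ℕ)) (α : List ℕ → ℝ) (μ σ2 : ℝ)
    (v : List ℕ) : ℝ :=
  if v ∈ T then
    (if v = [] then (∑ᶠ x ∈ T, α x * μ ^ x.length) ^ 2 else 0) +
      σ2 * ∑ᶠ x ∈ {w ∈ T | v <+: w ∧ w.length = v.length + 1},
        (∑ᶠ y ∈ {y ∈ T | x <+: y}, α y * μ ^ (y.length - x.length)) ^ 2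
  else 0

/-- The filtration `F_m = σ({X(v) : v ∈ T, d(v,ρ) ≤ m})`. -/
noncomputable def treeFiltration {Ω : Type*} [MeasurableSpace Ω] (T : Set (List ℕ))
    (Xv : List ℕ → Ω → ℝ) (m : ℕ) : MeasurableSpace Ω :=
  ⨆ v ∈ {v : List ℕ | v ∈ T ∧ v.length ≤ m}, MeasurableSpace.comap (Xv v) inferInstance

/-!
The conditional means of `M = Θ_T(X, α)` are explicit: the factors of a path below depth `m`
are independent of `F_m` and have mean `μ = E[X]`, so
`E[M | F_m] = ∑_v α(v) μ^{(|v|-m)⁺} ∏_{u ⪯ v, |u| ≤ m} X(u)`. Hence the increment at level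
`m + 1` is `∑_{|x| = m+1} c(x) (∏_{u ≺ x} X(u)) (X(x) - μ)` with `c(x) = ∑_{y ⪰ x} α(y) μ^{d(x,y)}`.
Given `F_m`, the variables `X(x) - μ` at level `m + 1` are independent and centred with variance
`Var(X)`, so the conditional second moment of the increment is
`Var(X) ∑_{|x| = m+1} c(x)² ∏_{u ≺ x} X(u)²`. Summing over `m` and indexing each child `x` by its
parent gives `Θ_T(X², β)`.
-/

namespace ProbabilityTheory

variable {Ω ι : Type*} {mΩ : MeasurableSpace Ω} {μ : Measure Ω}

theorem iIndepFun.integrable_finset_prod [IsFiniteMeasure μ] {Y : ι → Ω → ℝ} (hY : iIndepFun Y μ)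
    (hYm : ∀ i, Measurable (Y i)) {s : Finset ι} (hs : ∀ i ∈ s, Integrable (Y i) μ) :
    Integrable (fun ω => ∏ i ∈ s, Y i ω) μ := by
  classical
  induction s using Finset.induction_on with
  | empty => simp
  | insert a s ha ih =>
    simp_rw [Finset.prod_insert ha]
    have hind := hY.indepFun_finsetProd_of_notMem hYm ha
    rw [Finset.prod_fn] at hind
    exact hind.symm.integrable_mul (hs a (Finset.mem_insert_self a s))
      (ih fun i hi => hs i (Finset.mem_insert_of_mem hi))

theorem iIndepFun.integral_finset_prod {Y : ι → Ω → ℝ} (hY : iIndepFun Y μ)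
    (hYm : ∀ i, Measurable (Y i)) (s : Finset ι) :
    ∫ ω, ∏ i ∈ s, Y i ω ∂μ = ∏ i ∈ s, ∫ ω, Y i ω ∂μ := by
  have hs := iIndepFun.integral_fun_prod_eq_prod_integral
    (hY.precomp Subtype.val_injective (g := ((↑) : s → ι))) fun i => (hYm i).aestronglyMeasurable
  simp_rw [← Finset.prod_coe_sort s]
  exact hs

theorem Indep.indepFun {m₁ m₂ : MeasurableSpace Ω} (h : Indep m₁ m₂ μ) {f g : Ω → ℝ}
    (hf : Measurable[m₁] f) (hg : Measurable[m₂] g) : IndepFun f g μ :=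
  (IndepFun_iff_Indep f g μ).2
    (indep_of_indep_of_le_left (indep_of_indep_of_le_right h hg.comap_le) hf.comap_le)

theorem condExp_mul_of_indep [IsProbabilityMeasure μ] {m₁ m₂ : MeasurableSpace Ω}
    (hm₁ : m₁ ≤ mΩ) (hm₂ : m₂ ≤ mΩ) (hind : Indep m₂ m₁ μ) {f g : Ω → ℝ} (hf : StronglyMeasurable[m₁] f)
    (hg : StronglyMeasurable[m₂] g) (hfg : Integrable (f * g) μ) (hgi : Integrable g μ) :
    μ[f * g | m₁] =ᵐ[μ] fun ω => f ω * ∫ ω', g ω' ∂μ :=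
  (condExp_mul_of_stronglyMeasurable_left hf hfg hgi).trans
    ((condExp_indep_eq hm₂ hm₁ hg hind).mono fun ω hω => by simp [hω])

theorem memLp_two_mul_of_indep [IsFiniteMeasure μ] {m₁ m₂ : MeasurableSpace Ω}
    (hind : Indep m₁ m₂ μ) {f g : Ω → ℝ} (hf : Measurable[m₁] f) (hg : Measurable[m₂] g) (hf2 : MemLp f 2 μ)
    (hg2 : MemLp g 2 μ) : MemLp (f * g) 2 μ := by
  have hsq := (hind.indepFun (hf.pow_const 2) (hg.pow_const 2)).integrable_mul
    hf2.integrable_sq hg2.integrable_sq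
  refine (memLp_two_iff_integrable_sq (hf2.1.mul hg2.1)).2 ?_
  simpa only [Pi.mul_def, mul_pow] using hsq

theorem condExp_sq_sum_of_indep [IsProbabilityMeasure μ] {m₁ m₂ : MeasurableSpace Ω}
    (hm₁ : m₁ ≤ mΩ) (hm₂ : m₂ ≤ mΩ) (hind : Indep m₂ m₁ μ) (s : Finset ι) {f g : ι → Ω → ℝ}
    (hf : ∀ i ∈ s, StronglyMeasurable[m₁] (f i)) (hg : ∀ i ∈ s, StronglyMeasurable[m₂] (g i))
    (hf2 : ∀ i ∈ s, MemLp (f i) 2 μ) (hg2 : ∀ i ∈ s, MemLp (g i) 2 μ)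
    (horth : ∀ i ∈ s, ∀ j ∈ s, i ≠ j → ∫ ω, g i ω * g j ω ∂μ = 0) :
    μ[fun ω => (∑ i ∈ s, f i ω * g i ω) ^ 2 | m₁] =ᵐ[μ]
      fun ω => ∑ i ∈ s, f i ω ^ 2 * ∫ ω', g i ω' ^ 2 ∂μ := by
  have hfg2 : ∀ i ∈ s, MemLp (f i * g i) 2 μ := fun i hi =>
    memLp_two_mul_of_indep hind.symm (hf i hi).measurable (hg i hi).measurable (hf2 i hi)
      (hg2 i hi)
  have hexpand : (fun ω => (∑ i ∈ s, f i ω * g i ω) ^ 2)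
      = ∑ p ∈ s ×ˢ s, (f p.1 * f p.2) * (g p.1 * g p.2) := by
    ext ω
    simp only [sq, Finset.sum_mul_sum, ← Finset.sum_product', Finset.sum_apply, Pi.mul_apply]
    exact Finset.sum_congr rfl fun p _ => by ring
  have hint : ∀ p ∈ s ×ˢ s, Integrable ((f p.1 * f p.2) * (g p.1 * g p.2)) μ := by
    rintro ⟨i, j⟩ hij
    obtain ⟨hi, hj⟩ := Finset.mem_product.1 hij
    convert (hfg2 i hi).integrable_mul (hfg2 j hj) using 1
    ring
  have hterm : ∀ p ∈ s ×ˢ s, μ[(f p.1 * f p.2) * (g p.1 * g p.2) | m₁] =ᵐ[μ]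
      fun ω => f p.1 ω * f p.2 ω * ∫ ω', g p.1 ω' * g p.2 ω' ∂μ := by
    rintro ⟨i, j⟩ hij
    obtain ⟨hi, hj⟩ := Finset.mem_product.1 hij
    exact condExp_mul_of_indep hm₁ hm₂ hind ((hf i hi).mul (hf j hj))
      ((hg i hi).mul (hg j hj)) (hint (i, j) hij) ((hg2 i hi).integrable_mul (hg2 j hj))
  rw [hexpand]
  filter_upwards [condExp_finsetSum hint m₁, (eventually_all_finset _).2 hterm]
    with ω hsum hterm
  rw [hsum, Finset.sum_apply, Finset.sum_congr rfl hterm, Finset.sum_product]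
  refine Finset.sum_congr rfl fun i hi => ?_
  rw [Finset.sum_eq_single_of_mem i hi fun j hj hji => by rw [horth i hi j hj hji.symm, mul_zero]]
  simp only [sq]

end ProbabilityTheory

section Combinatorics

variable {Ω : Type*} {Y : List ℕ → Ω → ℝ}

/-- With this, `treeSum T Y α ω = ∑ᶠ v ∈ T, α v * pathProd Y v v.length ω`. -/
noncomputable def pathProd (Y : List ℕ → Ω → ℝ) (v : List ℕ) (n : ℕ) (ω : Ω) : ℝ :=
  ∏ k ∈ Finset.range n, Y (v.take (k + 1)) ω

def prefixes (A : Finset (List ℕ)) : Finset (List ℕ) :=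
  A.biUnion fun v => v.inits.toFinset

/-- The inner sum `∑_{y ∈ T(x)} α(y) μ^{d(x,y)}` of the new weight, over a finite set `A`
carrying `α`. -/
noncomputable def subtreeWeight (A : Finset (List ℕ)) (α : List ℕ → ℝ) (a : ℝ) (x : List ℕ) :
    ℝ :=
  ∑ v ∈ A with x <+: v, α v * a ^ (v.length - x.length)

theorem mem_prefixes {A : Finset (List ℕ)} {x : List ℕ} : x ∈ prefixes A ↔ ∃ v ∈ A, x <+: v := by
  simp [prefixes, List.mem_inits]

theorem mem_prefixes_of_prefix {A : Finset (List ℕ)} {x y : List ℕ} (hxy : x <+: y)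
    (hy : y ∈ prefixes A) : x ∈ prefixes A :=
  let ⟨v, hv, hyv⟩ := mem_prefixes.1 hy
  mem_prefixes.2 ⟨v, hv, hxy.trans hyv⟩

theorem prefixes_subset {T : Set (List ℕ)} (hTpref : ∀ u v : List ℕ, u <+: v → v ∈ T → u ∈ T)
    {A : Finset (List ℕ)} (hAT : ∀ v ∈ A, v ∈ T) {x : List ℕ} (hx : x ∈ prefixes A) : x ∈ T :=
  let ⟨v, hv, hxv⟩ := mem_prefixes.1 hx
  hTpref x v hxv (hAT v hv)

theorem mem_prefixes_of_subtreeWeight_ne_zero {A : Finset (List ℕ)} {α : List ℕ → ℝ} {a : ℝ}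
    {x : List ℕ} (hx : subtreeWeight A α a x ≠ 0) : x ∈ prefixes A :=
  let ⟨v, hv, _⟩ := Finset.exists_ne_zero_of_sum_ne_zero hx
  mem_prefixes.2 ⟨v, (Finset.mem_filter.1 hv).1, (Finset.mem_filter.1 hv).2⟩

theorem subtreeWeight_nil (A : Finset (List ℕ)) (α : List ℕ → ℝ) (a : ℝ) :
    subtreeWeight A α a [] = ∑ v ∈ A, α v * a ^ v.length := by
  simp [subtreeWeight]

theorem take_succ_mem_of_lt_length {T : Set (List ℕ)}
    (hTpref : ∀ u v : List ℕ, u <+: v → v ∈ T → u ∈ T) {v : List ℕ} (hv : v ∈ T) {k : ℕ}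
    (hk : k < v.length) : v.take (k + 1) ∈ T ∧ v.take (k + 1) ≠ [] :=
  ⟨hTpref _ v (List.take_prefix _ _) hv,
    List.ne_nil_of_length_pos (by rw [List.length_take_of_le hk]; omega)⟩

theorem prefix_and_length_eq_succ_iff {v x : List ℕ} :
    v <+: x ∧ x.length = v.length + 1 ↔ x ≠ [] ∧ v = x.dropLast := by
  constructor
  · rintro ⟨hvx, hlen⟩
    refine ⟨fun h => by simp [h] at hlen, ?_⟩
    rw [List.prefix_iff_eq_take.1 hvx, List.dropLast_eq_take]
    congr 1
    omega
  · rintro ⟨hx, rfl⟩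
    refine ⟨List.dropLast_prefix x, ?_⟩
    have := List.length_pos_iff.2 hx
    simp only [List.length_dropLast]
    omega

theorem pathProd_take (v : List ℕ) {m n : ℕ} (hmn : m ≤ n) (ω : Ω) :
    pathProd Y (v.take n) m ω = pathProd Y v m ω :=
  Finset.prod_congr rfl fun k hk => by
    rw [List.take_take, min_eq_left (by simp at hk; omega)]

theorem pathProd_sq (v : List ℕ) (n : ℕ) (ω : Ω) :
    pathProd (fun u ω => Y u ω ^ 2) v n ω = pathProd Y v n ω ^ 2 := by
  rw [pathProd, pathProd, Finset.prod_pow]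

theorem condMean_succ_sub_condMean (a : ℝ) (v : List ℕ) (m : ℕ) (ω : Ω) :
    a ^ (v.length - (m + 1)) * pathProd Y v (min v.length (m + 1)) ω -
        a ^ (v.length - m) * pathProd Y v (min v.length m) ω =
      if m < v.length then
        a ^ (v.length - (m + 1)) *
          (pathProd Y (v.take (m + 1)) m ω * (Y (v.take (m + 1)) ω - a))
      else 0 := by
  split_ifs with hm
  · rw [min_eq_right hm, min_eq_right hm.le, pathProd_take v (Nat.le_succ m),
      show v.length - m = v.length - (m + 1) + 1 by omega, pathProd, Finset.prod_range_succ]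
    simp only [pathProd, pow_succ]
    ring
  · rw [min_eq_left (by omega), min_eq_left (by omega), Nat.sub_eq_zero_of_le (by omega),
      Nat.sub_eq_zero_of_le (by omega), sub_self]

/-- The increment of the conditional means at level `m + 1`, regrouped by the vertex
`x = v.take (m + 1)` through which the path to `v` leaves level `m`. -/
theorem sum_condMean_succ_sub_sum_condMean (A : Finset (List ℕ)) (α : List ℕ → ℝ) (a : ℝ)
    (m : ℕ) (ω : Ω) :
    ∑ v ∈ A, α v * (a ^ (v.length - (m + 1)) * pathProd Y v (min v.length (m + 1)) ω) -
        ∑ v ∈ A, α v * (a ^ (v.length - m) * pathProd Y v (min v.length m) ω) =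
      ∑ x ∈ prefixes A with x.length = m + 1,
        subtreeWeight A α a x * pathProd Y x m ω * (Y x ω - a) := by
  simp_rw [← Finset.sum_sub_distrib, ← mul_sub, condMean_succ_sub_condMean, mul_ite, mul_zero,
    ← Finset.sum_filter, subtreeWeight, Finset.sum_mul]
  rw [← Finset.sum_comm' (s := A.filter (m < ·.length)) (t := fun v => {v.take (m + 1)})]
  · refine Finset.sum_congr rfl fun v hv => ?_
    rw [Finset.sum_singleton, List.length_take_of_le (Finset.mem_filter.1 hv).2]
    ring
  · intro v x
    simp only [Finset.mem_filter, Finset.mem_singleton, mem_prefixes]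
    constructor
    · rintro ⟨⟨hv, hm⟩, rfl⟩
      exact ⟨⟨hv, List.take_prefix _ _⟩, ⟨v, hv, List.take_prefix _ _⟩, List.length_take_of_le hm⟩
    · rintro ⟨⟨hv, hxv⟩, -, hx⟩
      refine ⟨⟨hv, by have := hxv.length_le; omega⟩, ?_⟩
      rw [List.prefix_iff_eq_take.1 hxv, hx]

theorem treeSum_eq_sum {T : Set (List ℕ)} {α : List ℕ → ℝ} {A : Finset (List ℕ)}
    (hαA : ∀ v, α v ≠ 0 → v ∈ A) (hAT : ∀ v ∈ A, v ∈ T) :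
    treeSum T Y α = fun ω => ∑ v ∈ A, α v * pathProd Y v v.length ω :=
  funext fun _ => finsum_mem_eq_sum_of_subset _
    (fun v ⟨_, hv⟩ => hαA v (left_ne_zero_of_mul hv)) hAT

theorem tsum_sum_filter_length_eq_succ (s : Finset (List ℕ)) (g : List ℕ → ℕ → ℝ) :
    ∑' m, ∑ x ∈ s with x.length = m + 1, g x m = ∑ x ∈ s with x ≠ [], g x (x.length - 1) := by
  set L := s.sup List.length
  have hL : ∀ x ∈ s, x.length ≤ L := fun x hx => Finset.le_sup hx
  rw [tsum_eq_sum (s := Finset.range L) fun m hm => Finset.sum_eq_zero fun x hx => ?_]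
  · refine (Finset.sum_comm' (t' := s.filter (· ≠ [])) (s' := fun x => {x.length - 1})
      fun m x => ?_).trans (Finset.sum_congr rfl fun x _ => Finset.sum_singleton _ _)
    simp only [Finset.mem_range, Finset.mem_filter, Finset.mem_singleton, ne_eq,
      ← List.length_eq_zero_iff]
    constructor
    · rintro ⟨hm, hx, hlen⟩
      exact ⟨by omega, hx, by omega⟩
    · rintro ⟨rfl, hx, hlen⟩
      have := hL x hx
      exact ⟨by omega, hx, by omega⟩
  · have := hL x (Finset.mem_filter.1 hx).1
    simp only [Finset.mem_range, Finset.mem_filter] at hm hx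
    omega

end Combinatorics

section NewWeight

variable {Ω : Type*} {T : Set (List ℕ)} {α : List ℕ → ℝ} {A : Finset (List ℕ)} {a σ2 : ℝ}

theorem finsum_eq_subtreeWeight (hαA : ∀ v, α v ≠ 0 → v ∈ A) (hAT : ∀ v ∈ A, v ∈ T)
    (x : List ℕ) :
    ∑ᶠ y ∈ {y ∈ T | x <+: y}, α y * a ^ (y.length - x.length) = subtreeWeight A α a x :=
  finsum_mem_eq_sum_of_subset _
    (fun y ⟨⟨_, hxy⟩, hy⟩ => Finset.mem_filter.2 ⟨hαA y (left_ne_zero_of_mul hy), hxy⟩)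
    fun y hy => ⟨hAT y (Finset.mem_filter.1 hy).1, (Finset.mem_filter.1 hy).2⟩

theorem newWeight_eq (hTpref : ∀ u v : List ℕ, u <+: v → v ∈ T → u ∈ T)
    (hαA : ∀ v, α v ≠ 0 → v ∈ A) (hAT : ∀ v ∈ A, v ∈ T) {v : List ℕ} (hv : v ∈ T) :
    newWeight T α a σ2 v =
      (if v = [] then subtreeWeight A α a [] ^ 2 else 0) +
        σ2 * ∑ x ∈ prefixes A with v <+: x ∧ x.length = v.length + 1,
          subtreeWeight A α a x ^ 2 := by
  have hroot := finsum_eq_subtreeWeight (a := a) hαA hAT []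
  simp only [List.nil_prefix, and_true, Set.ofPred_mem_eq, List.length_nil,
    Nat.sub_zero] at hroot
  rw [newWeight, if_pos hv, hroot]
  simp_rw [finsum_eq_subtreeWeight hαA hAT]
  congr 2
  refine finsum_mem_eq_sum_of_subset _ (fun x ⟨⟨_, hx⟩, hne⟩ => ?_) fun x hx => ?_
  · exact Finset.mem_filter.2
      ⟨mem_prefixes_of_subtreeWeight_ne_zero (pow_ne_zero_iff two_ne_zero |>.1 hne), hx⟩
  · obtain ⟨hxA, hx⟩ := Finset.mem_filter.1 hx
    exact ⟨prefixes_subset hTpref hAT hxA, hx⟩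

theorem mem_prefixes_of_newWeight_ne_zero (hTpref : ∀ u v : List ℕ, u <+: v → v ∈ T → u ∈ T)
    (hαA : ∀ v, α v ≠ 0 → v ∈ A) (hAT : ∀ v ∈ A, v ∈ T) {v : List ℕ}
    (hv : newWeight T α a σ2 v ≠ 0) : v ∈ prefixes A := by
  have hvT : v ∈ T := by_contra fun h => hv (by rw [newWeight, if_neg h])
  rw [newWeight_eq hTpref hαA hAT hvT] at hv
  by_cases hchild : ∑ x ∈ prefixes A with v <+: x ∧ x.length = v.length + 1,
      subtreeWeight A α a x ^ 2 = 0
  · rw [hchild, mul_zero, add_zero] at hv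
    split_ifs at hv with hnil
    · exact hnil ▸ mem_prefixes_of_subtreeWeight_ne_zero (pow_ne_zero_iff two_ne_zero |>.1 hv)
    · exact absurd rfl hv
  · obtain ⟨x, hx, -⟩ := Finset.exists_ne_zero_of_sum_ne_zero hchild
    obtain ⟨hxA, hvx, -⟩ := Finset.mem_filter.1 hx
    exact mem_prefixes_of_prefix hvx hxA

/-- The children sums are reindexed by the child `x`, whose parent is `x.dropLast`. -/
theorem treeSum_sq_newWeight_eq (hTpref : ∀ u v : List ℕ, u <+: v → v ∈ T → u ∈ T)
    (hαA : ∀ v, α v ≠ 0 → v ∈ A) (hAT : ∀ v ∈ A, v ∈ T) (Y : List ℕ → Ω → ℝ) (ω : Ω) :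
    treeSum T (fun v ω => Y v ω ^ 2) (newWeight T α a σ2) ω =
      subtreeWeight A α a [] ^ 2 +
        σ2 * ∑ x ∈ prefixes A with x ≠ [],
          subtreeWeight A α a x ^ 2 * pathProd Y x (x.length - 1) ω ^ 2 := by
  rw [treeSum_eq_sum (fun v => mem_prefixes_of_newWeight_ne_zero hTpref hαA hAT)
    fun v => prefixes_subset hTpref hAT]
  beta_reduce
  rw [Finset.sum_congr rfl fun v hv => by rw [newWeight_eq hTpref hαA hAT
    (prefixes_subset hTpref hAT hv), add_mul], Finset.sum_add_distrib]
  congr 1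
  · simp_rw [ite_mul, zero_mul, Finset.sum_ite_eq']
    split_ifs with hnil
    · simp [pathProd]
    · rw [not_not.1 (mt (mem_prefixes_of_subtreeWeight_ne_zero (α := α) (a := a)) hnil)]
      simp
  · simp_rw [Finset.mul_sum, Finset.sum_mul]
    rw [Finset.sum_comm' (t' := (prefixes A).filter (· ≠ [])) (s' := fun x => {x.dropLast})]
    · refine Finset.sum_congr rfl fun x hx => ?_
      rw [Finset.sum_singleton, List.length_dropLast, List.dropLast_eq_take, pathProd_sq,
        pathProd_take x le_rfl]
      ring
    · intro v x
      simp only [Finset.mem_filter, Finset.mem_singleton, prefix_and_length_eq_succ_iff]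
      constructor
      · rintro ⟨-, hx, hne, rfl⟩
        exact ⟨rfl, hx, hne⟩
      · rintro ⟨rfl, hx, hne⟩
        exact ⟨mem_prefixes_of_prefix (List.dropLast_prefix x) hx, hx, hne, rfl⟩

end NewWeight

section TreeModel

variable {Ω : Type*} {mΩ : MeasurableSpace Ω} {μ : Measure Ω}

noncomputable def treeTail (T : Set (List ℕ)) (Xv : List ℕ → Ω → ℝ) (m : ℕ) :
    MeasurableSpace Ω :=
  ⨆ i ∈ {i : {v : List ℕ // v ∈ T ∧ v ≠ []} | m < i.1.length},
    MeasurableSpace.comap (Xv i.1) inferInstance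

variable {T : Set (List ℕ)} {Xv : List ℕ → Ω → ℝ}

theorem treeFiltration_le (hXv : ∀ v, Measurable (Xv v)) (m : ℕ) :
    treeFiltration T Xv m ≤ mΩ :=
  iSup₂_le fun v _ => (hXv v).comap_le

theorem treeTail_le (hXv : ∀ v, Measurable (Xv v)) (m : ℕ) : treeTail T Xv m ≤ mΩ :=
  iSup₂_le fun i _ => (hXv i.1).comap_le

theorem measurable_treeFiltration {m : ℕ} {u : List ℕ} (hu : u ∈ T) (hlen : u.length ≤ m) :
    Measurable[treeFiltration T Xv m] (Xv u) :=
  comap_measurable (Xv u) |>.mono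
    (le_iSup₂ (f := fun v (_ : v ∈ {v : List ℕ | v ∈ T ∧ v.length ≤ m}) =>
      MeasurableSpace.comap (Xv v) inferInstance) u ⟨hu, hlen⟩) le_rfl

theorem measurable_treeTail {m : ℕ} {u : List ℕ} (hu : u ∈ T) (hne : u ≠ [])
    (hlen : m < u.length) : Measurable[treeTail T Xv m] (Xv u) :=
  comap_measurable (Xv u) |>.mono
    (le_iSup₂ (f := fun (i : {v : List ℕ // v ∈ T ∧ v ≠ []})
      (_ : i ∈ {i : {v : List ℕ // v ∈ T ∧ v ≠ []} | m < i.1.length}) =>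
      MeasurableSpace.comap (Xv i.1) inferInstance) ⟨u, hu, hne⟩ hlen) le_rfl

/-- The root variable is constant, so it does not enter `treeFiltration`; the remaining
generators of the two σ-algebras sit at disjoint sets of vertices. -/
theorem indep_treeTail_treeFiltration (hXv : ∀ v, Measurable (Xv v))
    (hroot : ∀ ω, Xv [] ω = 1)
    (hindep : iIndepFun (fun v : {v : List ℕ // v ∈ T ∧ v ≠ []} => Xv v.1) μ) (m : ℕ) :
    Indep (treeTail T Xv m) (treeFiltration T Xv m) μ := by
  have hdisj : Disjoint {i : {v : List ℕ // v ∈ T ∧ v ≠ []} | m < i.1.length}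
      {i | i.1.length ≤ m} :=
    Set.disjoint_left.2 fun _ (hi : m < _) (hi' : _ ≤ m) => absurd hi (not_lt.2 hi')
  have h := indep_iSup_of_disjoint (fun i => (hXv i.1).comap_le) hindep.iIndep hdisj
  refine indep_of_indep_of_le_right h (iSup₂_le fun v hv => ?_)
  obtain ⟨hv, hlen⟩ := hv
  rcases eq_or_ne v [] with rfl | hne
  · rw [show Xv [] = fun _ => (1 : ℝ) from funext hroot, MeasurableSpace.comap_const]
    exact bot_le
  · exact le_iSup₂ (f := fun (i : {v : List ℕ // v ∈ T ∧ v ≠ []})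
      (_ : i ∈ {i : {v : List ℕ // v ∈ T ∧ v ≠ []} | i.1.length ≤ m}) =>
      MeasurableSpace.comap (Xv i.1) inferInstance) ⟨v, hv, hne⟩ hlen

theorem stronglyMeasurable_pathProd (hTpref : ∀ u v : List ℕ, u <+: v → v ∈ T → u ∈ T)
    {m n : ℕ} {v : List ℕ} (hv : v ∈ T) (hn : n ≤ m) :
    StronglyMeasurable[treeFiltration T Xv m] (pathProd Xv v n) := by
  refine (Finset.measurable_prod _ fun k hk => ?_).stronglyMeasurable
  refine measurable_treeFiltration (hTpref _ v (List.take_prefix _ _) hv) ?_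
  simp only [Finset.mem_range] at hk
  simp only [List.length_take]
  omega

end TreeModel

section PathMoments

variable {Ω : Type*} {mΩ : MeasurableSpace Ω} {μ : Measure Ω} {T : Set (List ℕ)}

/-- The edges `k ∈ [i, j)` of the path to `v` are distinct non-root vertices of `T`. -/
theorem prod_Ico_take_eq_prod_subtype (hTpref : ∀ u v : List ℕ, u <+: v → v ∈ T → u ∈ T)
    {v : List ℕ} (hv : v ∈ T) {i j : ℕ} (hj : j ≤ v.length) (F : List ℕ → ℝ) :
    ∏ k ∈ Finset.Ico i j, F (v.take (k + 1)) =
      ∏ u ∈ ((Finset.Ico i j).image fun k => v.take (k + 1)).subtype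
        (fun u => u ∈ T ∧ u ≠ []), F u.1 := by
  have hk : ∀ k ∈ Finset.Ico i j, k < v.length := fun k hk => by
    have := (Finset.mem_Ico.1 hk).2
    omega
  rw [Finset.prod_subtype_of_mem (fun u => F u), Finset.prod_image]
  · intro k hki l hli hkl
    simpa [List.length_take_of_le (hk k hki), List.length_take_of_le (hk l hli)] using
      congrArg List.length hkl
  · simp only [Finset.mem_image]
    rintro _ ⟨k, hki, rfl⟩
    exact take_succ_mem_of_lt_length hTpref hv (hk k hki)

variable {Y : List ℕ → Ω → ℝ}

theorem integrable_prod_Ico_take [IsFiniteMeasure μ]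
    (hTpref : ∀ u v : List ℕ, u <+: v → v ∈ T → u ∈ T) (hYm : ∀ u, Measurable (Y u))
    (hY : iIndepFun (fun u : {u : List ℕ // u ∈ T ∧ u ≠ []} => Y u.1) μ)
    (hYi : ∀ u ∈ T, u ≠ [] → Integrable (Y u) μ) {v : List ℕ} (hv : v ∈ T) {i j : ℕ}
    (hj : j ≤ v.length) :
    Integrable (fun ω => ∏ k ∈ Finset.Ico i j, Y (v.take (k + 1)) ω) μ := by
  have h := fun ω => prod_Ico_take_eq_prod_subtype hTpref hv hj (i := i) fun u => Y u ω
  simp only [h]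
  exact hY.integrable_finset_prod (fun u => hYm u.1) fun u _ => hYi u.1 u.2.1 u.2.2

theorem integral_prod_Ico_take
    (hTpref : ∀ u v : List ℕ, u <+: v → v ∈ T → u ∈ T) (hYm : ∀ u, Measurable (Y u))
    (hY : iIndepFun (fun u : {u : List ℕ // u ∈ T ∧ u ≠ []} => Y u.1) μ)
    {v : List ℕ} (hv : v ∈ T) {i j : ℕ} (hj : j ≤ v.length) :
    ∫ ω, ∏ k ∈ Finset.Ico i j, Y (v.take (k + 1)) ω ∂μ =
      ∏ k ∈ Finset.Ico i j, ∫ ω, Y (v.take (k + 1)) ω ∂μ := by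
  have h := fun ω => prod_Ico_take_eq_prod_subtype hTpref hv hj (i := i) fun u => Y u ω
  simp only [h, prod_Ico_take_eq_prod_subtype hTpref hv hj fun u => ∫ ω, Y u ω ∂μ]
  exact hY.integral_finset_prod (fun u => hYm u.1) _

end PathMoments

section CondExp

variable {Ω : Type*} {mΩ : MeasurableSpace Ω} {μ : Measure Ω} [IsProbabilityMeasure μ]
  {T : Set (List ℕ)} {Xv : List ℕ → Ω → ℝ} {a : ℝ}

theorem integrable_pathProd (hTpref : ∀ u v : List ℕ, u <+: v → v ∈ T → u ∈ T)
    (hXv : ∀ v, Measurable (Xv v))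
    (hindep : iIndepFun (fun v : {v : List ℕ // v ∈ T ∧ v ≠ []} => Xv v.1) μ)
    (hint : ∀ u ∈ T, u ≠ [] → Integrable (Xv u) μ) {v : List ℕ} (hv : v ∈ T) {n : ℕ}
    (hn : n ≤ v.length) : Integrable (pathProd Xv v n) μ := by
  have h := integrable_prod_Ico_take hTpref hXv hindep hint hv hn (i := 0)
  rwa [← Finset.range_eq_Ico] at h

theorem memLp_two_pathProd (hTpref : ∀ u v : List ℕ, u <+: v → v ∈ T → u ∈ T)
    (hXv : ∀ v, Measurable (Xv v))
    (hindep : iIndepFun (fun v : {v : List ℕ // v ∈ T ∧ v ≠ []} => Xv v.1) μ)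
    (hL2 : ∀ u ∈ T, u ≠ [] → MemLp (Xv u) 2 μ) {v : List ℕ} (hv : v ∈ T) {n : ℕ}
    (hn : n ≤ v.length) : MemLp (pathProd Xv v n) 2 μ := by
  refine (memLp_two_iff_integrable_sq
    (Finset.measurable_prod _ fun k _ => hXv _).aestronglyMeasurable).2 ?_
  have hsq := integrable_pathProd hTpref (fun u => (hXv u).pow_const 2)
    (hindep.comp (fun _ t => t ^ 2) fun _ => measurable_id.pow_const 2)
    (fun u hu hne => (hL2 u hu hne).integrable_sq) hv hn
  convert hsq using 1
  ext ω
  simp only [pathProd, Finset.prod_pow]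

theorem condExp_pathProd (hTpref : ∀ u v : List ℕ, u <+: v → v ∈ T → u ∈ T)
    (hXv : ∀ v, Measurable (Xv v)) (hroot : ∀ ω, Xv [] ω = 1)
    (hindep : iIndepFun (fun v : {v : List ℕ // v ∈ T ∧ v ≠ []} => Xv v.1) μ)
    (hint : ∀ u ∈ T, u ≠ [] → Integrable (Xv u) μ)
    (hmean : ∀ u ∈ T, u ≠ [] → ∫ ω, Xv u ω ∂μ = a) (m : ℕ) {v : List ℕ} (hv : v ∈ T) :
    μ[pathProd Xv v v.length | treeFiltration T Xv m] =ᵐ[μ]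
      fun ω => a ^ (v.length - m) * pathProd Xv v (min v.length m) ω := by
  have hF := treeFiltration_le (T := T) hXv m
  have hfull := integrable_pathProd hTpref hXv hindep hint hv le_rfl
  rcases le_or_gt v.length m with hle | hlt
  · rw [min_eq_left hle, Nat.sub_eq_zero_of_le hle,
      condExp_of_stronglyMeasurable hF (stronglyMeasurable_pathProd hTpref hv hle) hfull]
    simp
  -- the factors below depth `m` are independent of `treeFiltration T Xv m`
  set R := fun ω => ∏ k ∈ Finset.Ico m v.length, Xv (v.take (k + 1)) ω
  have hsplit : pathProd Xv v v.length = pathProd Xv v m * R :=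
    funext fun ω => (Finset.prod_range_mul_prod_Ico _ hlt.le).symm
  have hR : StronglyMeasurable[treeTail T Xv m] R := by
    refine (Finset.measurable_prod _ fun k hk => ?_).stronglyMeasurable
    have hk := Finset.mem_Ico.1 hk
    have hmem := take_succ_mem_of_lt_length hTpref hv (k := k) (by omega)
    exact measurable_treeTail hmem.1 hmem.2 (by rw [List.length_take_of_le (by omega)]; omega)
  have hRval : ∫ ω, R ω ∂μ = a ^ (v.length - m) := by
    rw [integral_prod_Ico_take hTpref hXv hindep hv le_rfl, Finset.prod_congr rfl fun k hk => ?_,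
      Finset.prod_const, Nat.card_Ico]
    have hk := Finset.mem_Ico.1 hk
    have hmem := take_succ_mem_of_lt_length hTpref hv (k := k) (by omega)
    exact hmean _ hmem.1 hmem.2
  rw [hsplit, min_eq_right hlt.le]
  refine (condExp_mul_of_indep hF (treeTail_le hXv m)
    (indep_treeTail_treeFiltration hXv hroot hindep m)
    (stronglyMeasurable_pathProd hTpref hv le_rfl) hR (hsplit ▸ hfull) (integrable_prod_Ico_take hTpref hXv hindep hint hv le_rfl)).trans ?_
  filter_upwards with ω
  rw [hRval, mul_comm]

end CondExp

section CondExpTree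

variable {Ω : Type*} {mΩ : MeasurableSpace Ω} {μ : Measure Ω} [IsProbabilityMeasure μ]
  {T : Set (List ℕ)} {Xv : List ℕ → Ω → ℝ} {a : ℝ}

theorem condExp_treeSum (hTpref : ∀ u v : List ℕ, u <+: v → v ∈ T → u ∈ T)
    (hXv : ∀ v, Measurable (Xv v)) (hroot : ∀ ω, Xv [] ω = 1)
    (hindep : iIndepFun (fun v : {v : List ℕ // v ∈ T ∧ v ≠ []} => Xv v.1) μ)
    (hint : ∀ u ∈ T, u ≠ [] → Integrable (Xv u) μ)
    (hmean : ∀ u ∈ T, u ≠ [] → ∫ ω, Xv u ω ∂μ = a) {α : List ℕ → ℝ} {A : Finset (List ℕ)}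
    (hαA : ∀ v, α v ≠ 0 → v ∈ A) (hAT : ∀ v ∈ A, v ∈ T) (m : ℕ) :
    μ[treeSum T Xv α | treeFiltration T Xv m] =ᵐ[μ]
      fun ω => ∑ v ∈ A, α v * (a ^ (v.length - m) * pathProd Xv v (min v.length m) ω) := by
  have hsum : treeSum T Xv α = ∑ v ∈ A, α v • pathProd Xv v v.length := by
    rw [treeSum_eq_sum hαA hAT]
    ext ω
    simp [Finset.sum_apply]
  rw [hsum]
  have hterm : ∀ v ∈ A, μ[α v • pathProd Xv v v.length | treeFiltration T Xv m] =ᵐ[μ]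
      fun ω => α v * (a ^ (v.length - m) * pathProd Xv v (min v.length m) ω) := fun v hv =>
    (condExp_smul _ _ _).trans <|
      (condExp_pathProd hTpref hXv hroot hindep hint hmean m (hAT v hv)).mono fun ω hω => by
        simp [hω]
  filter_upwards [condExp_finsetSum (fun v hv =>
      (integrable_pathProd hTpref hXv hindep hint (hAT v hv) le_rfl).smul (α v)) _,
    (eventually_all_finset A).2 hterm] with ω hsum hterm
  rw [hsum, Finset.sum_apply]
  exact Finset.sum_congr rfl hterm

theorem condExp_sq_increment (hTpref : ∀ u v : List ℕ, u <+: v → v ∈ T → u ∈ T)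
    (hXv : ∀ v, Measurable (Xv v)) (hroot : ∀ ω, Xv [] ω = 1)
    (hindep : iIndepFun (fun v : {v : List ℕ // v ∈ T ∧ v ≠ []} => Xv v.1) μ)
    (hL2 : ∀ u ∈ T, u ≠ [] → MemLp (Xv u) 2 μ) (hmean : ∀ u ∈ T, u ≠ [] → ∫ ω, Xv u ω ∂μ = a)
    {σ2 : ℝ} (hvar : ∀ u ∈ T, u ≠ [] → ∫ ω, (Xv u ω - a) ^ 2 ∂μ = σ2) (m : ℕ)
    {E : Finset (List ℕ)} (hE : ∀ x ∈ E, x ∈ T ∧ x.length = m + 1) (c : List ℕ → ℝ) :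
    μ[fun ω => (∑ x ∈ E, c x * pathProd Xv x m ω * (Xv x ω - a)) ^ 2 | treeFiltration T Xv m]
      =ᵐ[μ] fun ω => σ2 * ∑ x ∈ E, c x ^ 2 * pathProd Xv x m ω ^ 2 := by
  have hx : ∀ x ∈ E, x ∈ T ∧ x ≠ [] ∧ m < x.length := fun x hx => by
    obtain ⟨hxT, hlen⟩ := hE x hx
    exact ⟨hxT, List.ne_nil_of_length_pos (by omega), by omega⟩
  have hcentered : ∀ x ∈ E, ∫ ω, (Xv x ω - a) ∂μ = 0 := fun x hxE => by
    obtain ⟨hxT, hne, -⟩ := hx x hxE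
    rw [integral_sub ((hL2 x hxT hne).integrable one_le_two) (integrable_const a),
      hmean x hxT hne, integral_const, probReal_univ, one_smul, sub_self]
  have horth : ∀ x ∈ E, ∀ y ∈ E, x ≠ y → ∫ ω, (Xv x ω - a) * (Xv y ω - a) ∂μ = 0 := by
    intro x hxE y hyE hxy
    have hind := (hindep.indepFun (i := ⟨x, (hx x hxE).1, (hx x hxE).2.1⟩)
      (j := ⟨y, (hx y hyE).1, (hx y hyE).2.1⟩) fun h => hxy (congrArg Subtype.val h)).comp
      (measurable_id.sub_const a) (measurable_id.sub_const a)
    have h := hind.integral_fun_mul_eq_mul_integral ((hXv x).sub_const a).aestronglyMeasurable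
      ((hXv y).sub_const a).aestronglyMeasurable
    simp only [Function.comp_apply, id] at h
    rw [h, hcentered x hxE, zero_mul]
  have key := condExp_sq_sum_of_indep (treeFiltration_le hXv m) (treeTail_le hXv m)
    (indep_treeTail_treeFiltration hXv hroot hindep m) E
    (f := fun x ω => c x * pathProd Xv x m ω) (g := fun x ω => Xv x ω - a)
    (fun x hxE => (stronglyMeasurable_pathProd hTpref (hx x hxE).1 le_rfl).const_mul (c x))
    (fun x hxE => ((measurable_treeTail (hx x hxE).1 (hx x hxE).2.1
      (hx x hxE).2.2).sub_const a).stronglyMeasurable)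
    (fun x hxE => (memLp_two_pathProd hTpref hXv hindep hL2 (hx x hxE).1
      (hx x hxE).2.2.le).const_mul (c x))
    (fun x hxE => (hL2 x (hx x hxE).1 (hx x hxE).2.1).sub (memLp_const a)) horth
  refine key.trans (Filter.Eventually.of_forall fun ω => ?_)
  simp only [Finset.mul_sum]
  refine Finset.sum_congr rfl fun x hxE => ?_
  rw [hvar x (hx x hxE).1 (hx x hxE).2.1]
  ring

end CondExpTree

section SquareFunction

variable {Ω : Type*} {mΩ : MeasurableSpace Ω}

/-- `s(M)²` for the filtration `ℱ`. -/
noncomputable def condSquareFunction (μ : Measure Ω) (ℱ : ℕ → MeasurableSpace Ω)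
    (M : Ω → ℝ) (ω : Ω) : ℝ :=
  (μ[M | ℱ 0] ω) ^ 2 +
    ∑' m : ℕ, (μ[fun ω' => (μ[M | ℱ (m + 1)] ω' - μ[M | ℱ m] ω') ^ 2 | ℱ m]) ω

theorem condSquareFunction_treeSum_ae_eq {μ : Measure Ω} [IsProbabilityMeasure μ]
    {T : Set (List ℕ)} (hTpref : ∀ u v : List ℕ, u <+: v → v ∈ T → u ∈ T)
    {α : List ℕ → ℝ} {A : Finset (List ℕ)} (hαA : ∀ v, α v ≠ 0 → v ∈ A)
    (hAT : ∀ v ∈ A, v ∈ T) {Xv : List ℕ → Ω → ℝ} (hXv : ∀ v, Measurable (Xv v))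
    (hroot : ∀ ω, Xv [] ω = 1)
    (hindep : iIndepFun (fun v : {v : List ℕ // v ∈ T ∧ v ≠ []} => Xv v.1) μ) {a σ2 : ℝ}
    (hL2 : ∀ u ∈ T, u ≠ [] → MemLp (Xv u) 2 μ) (hmean : ∀ u ∈ T, u ≠ [] → ∫ ω, Xv u ω ∂μ = a)
    (hvar : ∀ u ∈ T, u ≠ [] → ∫ ω, (Xv u ω - a) ^ 2 ∂μ = σ2) :
    ∀ᵐ ω ∂μ, condSquareFunction μ (treeFiltration T Xv) (treeSum T Xv α) ω =
      treeSum T (fun v ω => Xv v ω ^ 2) (newWeight T α a σ2) ω := by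
  have hcond := condExp_treeSum hTpref hXv hroot hindep
    (fun u hu hne => (hL2 u hu hne).integrable one_le_two) hmean hαA hAT
  have h0 : μ[treeSum T Xv α | treeFiltration T Xv 0] =ᵐ[μ]
      fun _ => subtreeWeight A α a [] := (hcond 0).mono fun ω hω => by
    simp [hω, subtreeWeight_nil, pathProd]
  have hincr : ∀ m, μ[fun ω => (μ[treeSum T Xv α | treeFiltration T Xv (m + 1)] ω -
        μ[treeSum T Xv α | treeFiltration T Xv m] ω) ^ 2 | treeFiltration T Xv m] =ᵐ[μ]
      fun ω => σ2 * ∑ x ∈ prefixes A with x.length = m + 1,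
        subtreeWeight A α a x ^ 2 * pathProd Xv x m ω ^ 2 := fun m => by
    have hdiff : (fun ω => (μ[treeSum T Xv α | treeFiltration T Xv (m + 1)] ω -
        μ[treeSum T Xv α | treeFiltration T Xv m] ω) ^ 2) =ᵐ[μ]
        fun ω => (∑ x ∈ prefixes A with x.length = m + 1,
          subtreeWeight A α a x * pathProd Xv x m ω * (Xv x ω - a)) ^ 2 := by
      filter_upwards [hcond (m + 1), hcond m] with ω h h'
      rw [h, h', sum_condMean_succ_sub_sum_condMean]
    exact (condExp_congr_ae hdiff).trans (condExp_sq_increment hTpref hXv hroot hindep hL2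
      hmean hvar m (fun x hx =>
        ⟨prefixes_subset hTpref hAT (Finset.mem_filter.1 hx).1, (Finset.mem_filter.1 hx).2⟩) _)
  filter_upwards [h0, ae_all_iff.2 hincr] with ω h0 hincr
  rw [condSquareFunction, h0, tsum_congr hincr, tsum_mul_left,
    tsum_sum_filter_length_eq_succ (prefixes A)
      fun x m => subtreeWeight A α a x ^ 2 * pathProd Xv x m ω ^ 2,
    treeSum_sq_newWeight_eq hTpref hαA hAT]

end SquareFunction

theorem conditional_square_function_eq_treeSum_general
    {Ω : Type*} [MeasureSpace Ω] [IsProbabilityMeasure (ℙ : Measure Ω)]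
    (T : Set (List ℕ))
    (hTpref : ∀ u v : List ℕ, u <+: v → v ∈ T → u ∈ T)
    (α : List ℕ → ℝ) (hαT : ∀ v ∉ T, α v = 0)
    (hαfin : {v | α v ≠ 0}.Finite)
    (X : Ω → ℝ) (hXmeas : Measurable X)
    (hXsq : Integrable (fun ω => X ω ^ 2) ℙ)
    (Xv : List ℕ → Ω → ℝ) (hXvmeas : ∀ v, Measurable (Xv v))
    (hroot : ∀ ω, Xv [] ω = 1)
    (hindep : iIndepFun
      (fun v : {v : List ℕ // v ∈ T ∧ v ≠ []} => Xv v.1) ℙ)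
    (hident : ∀ v ∈ T, v ≠ [] → Measure.map (Xv v) ℙ = Measure.map X ℙ) :
    ∀ᵐ ω ∂ℙ,
      ((ℙ[treeSum T Xv α | treeFiltration T Xv 0]) ω) ^ 2 +
        ∑' m : ℕ,
          (ℙ[fun ω' =>
              ((ℙ[treeSum T Xv α | treeFiltration T Xv (m + 1)]) ω' -
                (ℙ[treeSum T Xv α | treeFiltration T Xv m]) ω') ^ 2
            | treeFiltration T Xv m]) ω
      = treeSum T (fun v ω' => Xv v ω' ^ 2)
          (newWeight T α (∫ ω', X ω' ∂ℙ) (variance X ℙ)) ω := by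
  have hid : ∀ v ∈ T, v ≠ [] → IdentDistrib (Xv v) X ℙ ℙ := fun v hv hne =>
    ⟨(hXvmeas v).aemeasurable, hXmeas.aemeasurable, hident v hv hne⟩
  have hX2 : MemLp X 2 ℙ := (memLp_two_iff_integrable_sq hXmeas.aestronglyMeasurable).2 hXsq
  refine condSquareFunction_treeSum_ae_eq hTpref (A := hαfin.toFinset)
    (fun v hv => by simpa using hv)
    (fun v hv => by_contra fun hvT => (Set.Finite.mem_toFinset _).1 hv (hαT v hvT))
    hXvmeas hroot hindep (fun v hv hne => (hid v hv hne).memLp_iff.2 hX2)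
    (fun v hv hne => (hid v hv hne).integral_eq) fun v hv hne => ?_
  rw [← (hid v hv hne).variance_eq, variance_eq_integral (hXvmeas v).aemeasurable,
    (hid v hv hne).integral_eq]

/-- Lemma 2.4: the conditional square function of `M = Θ_T(X, α)` is again a weighted
sum on `T`: almost surely
`s(M)² = M_0² + ∑_{m ≥ 1} E[(M_m - M_{m-1})² | F_{m-1}] = Θ_T(X², β)`,
where `β` is the new weight associated to `(T, α, X)`. -/
theorem conditional_square_function_eq_treeSum
    {Ω : Type*} [MeasureSpace Ω] [IsProbabilityMeasure (ℙ : Measure Ω)]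
    (T : Set (List ℕ)) (hTne : T.Nonempty)
    (hTpref : ∀ u v : List ℕ, u <+: v → v ∈ T → u ∈ T)
    (α : List ℕ → ℝ) (hα0 : ∀ v, 0 ≤ α v) (hαT : ∀ v ∉ T, α v = 0)
    (hαfin : {v | α v ≠ 0}.Finite)
    (X : Ω → ℝ) (hXmeas : Measurable X) (hX0 : ∀ ω, 0 ≤ X ω)
    (hXsq : Integrable (fun ω => X ω ^ 2) ℙ)
    (Xv : List ℕ → Ω → ℝ) (hXvmeas : ∀ v, Measurable (Xv v))
    (hroot : ∀ ω, Xv [] ω = 1)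
    (hindep : iIndepFun
      (fun v : {v : List ℕ // v ∈ T ∧ v ≠ []} => Xv v.1) ℙ)
    (hident : ∀ v ∈ T, v ≠ [] → Measure.map (Xv v) ℙ = Measure.map X ℙ) :
    ∀ᵐ ω ∂ℙ,
      ((ℙ[treeSum T Xv α | treeFiltration T Xv 0]) ω) ^ 2 +
        ∑' m : ℕ,
          (ℙ[fun ω' =>
              ((ℙ[treeSum T Xv α | treeFiltration T Xv (m + 1)]) ω' -
                (ℙ[treeSum T Xv α | treeFiltration T Xv m]) ω') ^ 2
            | treeFiltration T Xv m]) ω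
      = treeSum T (fun v ω' => Xv v ω' ^ 2)
          (newWeight T α (∫ ω', X ω' ∂ℙ) (variance X ℙ)) ω :=
  conditional_square_function_eq_treeSum_general T hTpref α hαT hαfin X hXmeas hXsq Xv hXvmeas hroot
    hindep hident
end

section
/- Let b ≥ 2 be an integer and let W be a nonnegative random variable with E[W] = 1. The following are equivalent: (i) W is equal in distribution to W_TC; (ii) E[W^q] = b^{q−1} for every q > 0; (iii) there exist two distinct real numbers q₁ ≠ q₂ in (1,∞) with E[W^{q₁}] = b^{q₁−1} and E[W^{q₂}] = b^{q₂−1}. -/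
/-!
Normalising `V = W / b`, condition (iii) says `E V = E V ^ q₁ = E V ^ q₂`. For `1 < q₁ < q₂` and
`γ = (q₂ - 1) / (q₁ - 1)`, the function `v ^ q₂ - γ v ^ q₁ + (γ - 1) v` has coefficient sum
zero, so its expectation at `V` vanishes; on `[0, ∞)` it equals `v (u ^ γ - 1 - γ (u - 1))` with
`u = v ^ (q₁ - 1)`, which by Bernoulli's inequality is nonnegative and zero only at `v ∈ {0, 1}`.
Hence `W ∈ {0, b}` almost surely, and `E W = 1` forces `P(W = b) = 1 / b`.
-/

open MeasureTheory ProbabilityTheory Filter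

open scoped ENNReal

lemma one_add_mul_sub_one_lt_rpow {u p : ℝ} (hu : 0 ≤ u) (hu₁ : u ≠ 1) (hp : 1 < p) :
    1 + p * (u - 1) < u ^ p := by
  simpa using one_add_mul_self_lt_rpow_one_add (by linarith) (sub_ne_zero.2 hu₁) hp

noncomputable def rpowGap (q₁ q₂ v : ℝ) : ℝ :=
  v ^ q₂ - (q₂ - 1) / (q₁ - 1) * v ^ q₁ + ((q₂ - 1) / (q₁ - 1) - 1) * v

lemma rpowGap_pos {q₁ q₂ v : ℝ} (hq₁ : 1 < q₁) (hq : q₁ < q₂) (hv : 0 < v) (hv₁ : v ≠ 1) :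
    0 < rpowGap q₁ q₂ v := by
  set γ := (q₂ - 1) / (q₁ - 1)
  set u := v ^ (q₁ - 1)
  have hγ : 1 < γ := (one_lt_div (by linarith)).2 (by linarith)
  have hu₁ : u ≠ 1 := by
    rw [Ne, ← Real.one_rpow (q₁ - 1), Real.rpow_left_inj hv.le zero_le_one (by linarith)]
    exact hv₁
  have huγ : u ^ γ = v ^ (q₂ - 1) := by
    rw [← Real.rpow_mul hv.le]
    congr 1
    exact mul_div_cancel₀ _ (by linarith)
  have hfactor : rpowGap q₁ q₂ v = v * (u ^ γ - (1 + γ * (u - 1))) := by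
    rw [huγ]
    simp only [u, γ, rpowGap]
    rw [Real.rpow_sub_one hv.ne', Real.rpow_sub_one hv.ne']
    field_simp
    ring
  rw [hfactor]
  exact mul_pos hv (sub_pos.2 (one_add_mul_sub_one_lt_rpow (by positivity) hu₁ hγ))

lemma rpowGap_nonneg {q₁ q₂ v : ℝ} (hq₁ : 1 < q₁) (hq : q₁ < q₂) (hv : 0 ≤ v) :
    0 ≤ rpowGap q₁ q₂ v := by
  rcases hv.eq_or_lt with rfl | hv
  · simp [rpowGap, Real.zero_rpow (by linarith : q₁ ≠ 0), Real.zero_rpow (by linarith : q₂ ≠ 0)]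
  rcases eq_or_ne v 1 with rfl | hv₁
  · simp [rpowGap]
  exact (rpowGap_pos hq₁ hq hv hv₁).le

section Moments

variable {Ω : Type*} {mΩ : MeasurableSpace Ω} {μ : Measure Ω}

lemma ae_eq_zero_or_eq_one_of_integral_rpow_eq {V : Ω → ℝ} {q₁ q₂ : ℝ} (hV0 : 0 ≤ᵐ[μ] V)
    (hq₁ : 1 < q₁) (hq : q₁ < q₂) (hV : Integrable V μ)
    (hV₁ : Integrable (fun ω ↦ V ω ^ q₁) μ) (hV₂ : Integrable (fun ω ↦ V ω ^ q₂) μ)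
    (e₁ : ∫ ω, V ω ^ q₁ ∂μ = ∫ ω, V ω ∂μ) (e₂ : ∫ ω, V ω ^ q₂ ∂μ = ∫ ω, V ω ∂μ) :
    ∀ᵐ ω ∂μ, V ω = 0 ∨ V ω = 1 := by
  set γ := (q₂ - 1) / (q₁ - 1)
  have hpow : Integrable (fun ω ↦ V ω ^ q₂ - γ * V ω ^ q₁) μ := hV₂.sub (hV₁.const_mul γ)
  have hgap : Integrable (fun ω ↦ rpowGap q₁ q₂ (V ω)) μ := hpow.add (hV.const_mul (γ - 1))
  have hgap_zero : ∫ ω, rpowGap q₁ q₂ (V ω) ∂μ = 0 := by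
    simp only [rpowGap]
    rw [integral_add hpow (hV.const_mul _), integral_sub hV₂ (hV₁.const_mul _),
      integral_const_mul, integral_const_mul, e₁, e₂]
    ring
  have hgap_nonneg : 0 ≤ᵐ[μ] fun ω ↦ rpowGap q₁ q₂ (V ω) := by
    filter_upwards [hV0] with ω hω using rpowGap_nonneg hq₁ hq hω
  filter_upwards [(integral_eq_zero_iff_of_nonneg_ae hgap_nonneg hgap).1 hgap_zero, hV0]
    with ω hω hω0
  by_contra! h
  exact (rpowGap_pos hq₁ hq (lt_of_le_of_ne hω0 (Ne.symm h.1)) h.2).ne' hω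

variable {W : Ω → ℝ} {c : ℝ}

lemma integral_div_const_rpow (hW0 : 0 ≤ᵐ[μ] W) (hc : 0 ≤ c) (q : ℝ) :
    ∫ ω, (W ω / c) ^ q ∂μ = (∫ ω, W ω ^ q ∂μ) / c ^ q := by
  rw [← integral_div]
  refine integral_congr_ae ?_
  filter_upwards [hW0] with ω hω using Real.div_rpow hω hc q

lemma MeasureTheory.Integrable.div_const_rpow (hW0 : 0 ≤ᵐ[μ] W) (hc : 0 ≤ c) {q : ℝ}
    (hW : Integrable (fun ω ↦ W ω ^ q) μ) : Integrable (fun ω ↦ (W ω / c) ^ q) μ := by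
  refine (hW.div_const (c ^ q)).congr ?_
  filter_upwards [hW0] with ω hω using (Real.div_rpow hω hc q).symm

lemma ae_eq_zero_or_eq_of_integral_rpow_eq {q₁ q₂ : ℝ} (hc : 0 < c)
    (hW0 : 0 ≤ᵐ[μ] W) (hq₁ : 1 < q₁) (hq₂ : 1 < q₂) (hq : q₁ ≠ q₂) (hW : Integrable W μ)
    (hW₁ : Integrable (fun ω ↦ W ω ^ q₁) μ) (hW₂ : Integrable (fun ω ↦ W ω ^ q₂) μ)
    (e₁ : ∫ ω, W ω ^ q₁ ∂μ = c ^ (q₁ - 1) * ∫ ω, W ω ∂μ)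
    (e₂ : ∫ ω, W ω ^ q₂ ∂μ = c ^ (q₂ - 1) * ∫ ω, W ω ∂μ) :
    ∀ᵐ ω ∂μ, W ω = 0 ∨ W ω = c := by
  wlog hlt : q₁ < q₂ generalizing q₁ q₂
  · exact this hq₂ hq₁ hq.symm hW₂ hW₁ e₂ e₁ (lt_of_le_of_ne (not_lt.1 hlt) hq.symm)
  have hmoment : ∀ q : ℝ, ∫ ω, W ω ^ q ∂μ = c ^ (q - 1) * ∫ ω, W ω ∂μ →
      ∫ ω, (W ω / c) ^ q ∂μ = ∫ ω, W ω / c ∂μ := by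
    intro q hmom
    rw [integral_div_const_rpow hW0 hc.le, hmom, integral_div, Real.rpow_sub_one hc.ne']
    field_simp
  have hV0 : 0 ≤ᵐ[μ] fun ω ↦ W ω / c := by
    filter_upwards [hW0] with ω hω using div_nonneg hω hc.le
  filter_upwards [ae_eq_zero_or_eq_one_of_integral_rpow_eq hV0 hq₁ hlt (hW.div_const c)
    (hW₁.div_const_rpow hW0 hc.le) (hW₂.div_const_rpow hW0 hc.le)
    (hmoment q₁ e₁) (hmoment q₂ e₂)] with ω hω
  rwa [div_eq_zero_iff, div_eq_one_iff_eq hc.ne', or_iff_left hc.ne'] at hω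

end Moments

lemma integral_smul_dirac_add_smul_dirac {α E : Type*} [MeasurableSpace α]
    [MeasurableSingletonClass α] [NormedAddCommGroup E] [NormedSpace ℝ E] [CompleteSpace E]
    {p r : ℝ≥0∞} (hp : p ≠ ∞) (hr : r ≠ ∞) (x y : α) (f : α → E) :
    ∫ a, f a ∂(p • Measure.dirac x + r • Measure.dirac y) = p.toReal • f x + r.toReal • f y := by
  rw [integral_add_measure ((integrable_dirac enorm_lt_top).smul_measure hp)
    ((integrable_dirac enorm_lt_top).smul_measure hr), integral_smul_measure,
    integral_smul_measure, integral_dirac, integral_dirac]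

lemma integral_rpow_WTCdist {b : ℕ} (hb : b ≠ 0) {q : ℝ} (hq : 0 < q) :
    ∫ x, x ^ q ∂WTCdist b = (b : ℝ) ^ (q - 1) := by
  rw [WTCdist, integral_smul_dirac_add_smul_dirac (by simpa using hb) (by simp),
    Real.zero_rpow hq.ne', Real.rpow_sub_one (by positivity)]
  simp [div_eq_inv_mul]

lemma map_eq_WTCdist {Ω : Type*} {mΩ : MeasurableSpace Ω} {μ : Measure Ω}
    [IsProbabilityMeasure μ] {W : Ω → ℝ} (hW : Measurable W) {b : ℕ} (hb : b ≠ 0)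
    (hW01 : ∀ᵐ ω ∂μ, W ω = b ∨ W ω = 0) (hmean : ∫ ω, W ω ∂μ = 1) :
    μ.map W = WTCdist b := by
  have hb' : (b : ℝ) ≠ 0 := by exact_mod_cast hb
  have hmap := (Measure.ae_eq_or_eq_iff_map_eq_dirac_add_dirac hW.aemeasurable hb').1 hW01
  have hp : μ (W ⁻¹' {(b : ℝ)}) = (b : ℝ≥0∞)⁻¹ := by
    have hmean' : ∫ x, x ∂μ.map W = 1 := by
      rwa [integral_map (f := fun x ↦ x) hW.aemeasurable aestronglyMeasurable_id]
    rw [hmap, integral_smul_dirac_add_smul_dirac (measure_ne_top _ _) (measure_ne_top _ _)]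
      at hmean'
    simp only [smul_eq_mul, mul_zero, add_zero] at hmean'
    rw [← ENNReal.ofReal_toReal (measure_ne_top μ _), eq_inv_of_mul_eq_one_left hmean',
      ENNReal.ofReal_inv_of_pos (by positivity), ENNReal.ofReal_natCast]
  have hr : μ (W ⁻¹' {0}) = 1 - (b : ℝ≥0∞)⁻¹ := by
    refine hp ▸ ENNReal.eq_sub_of_add_eq (measure_ne_top _ _) ?_
    have := Measure.isProbabilityMeasure_map (μ := μ) hW.aemeasurable
    simpa [hmap, add_comm] using measure_univ (μ := μ.map W)
  rw [hmap, hr, hp, WTCdist]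

/-- Lemma 3.2: for a nonnegative random variable `W` with `E[W] = 1`, the following
are equivalent: (i) `W` is distributed as `W_TC`; (ii) `E[W^q] = b^{q-1}` for every
`q > 0`; (iii) there are two distinct exponents `q₁ ≠ q₂` in `(1, ∞)` with
`E[W^{q₁}] = b^{q₁-1}` and `E[W^{q₂}] = b^{q₂-1}`. -/
theorem totally_critical_characterization
    {Ω : Type*} [MeasureSpace Ω] [IsProbabilityMeasure (ℙ : Measure Ω)]
    (b : ℕ) (hb : 2 ≤ b)
    (W : Ω → ℝ) (hWmeas : Measurable W) (hW0 : ∀ ω, 0 ≤ W ω)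
    (hWmean : ∫ ω, W ω ∂ℙ = 1) :
    List.TFAE
      [Measure.map W ℙ = WTCdist b,
       ∀ q : ℝ, 0 < q → ∫ ω, W ω ^ q ∂ℙ = (b : ℝ) ^ (q - 1),
       ∃ q₁ q₂ : ℝ, 1 < q₁ ∧ 1 < q₂ ∧ q₁ ≠ q₂ ∧
         ∫ ω, W ω ^ q₁ ∂ℙ = (b : ℝ) ^ (q₁ - 1) ∧
         ∫ ω, W ω ^ q₂ ∂ℙ = (b : ℝ) ^ (q₂ - 1)] := by
  have hb0 : b ≠ 0 := by omega
  tfae_have 1 → 2 := fun hmap q hq ↦ by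
    rw [← integral_rpow_WTCdist hb0 hq, ← hmap, integral_map (f := fun x ↦ x ^ q)
      hWmeas.aemeasurable (measurable_id.pow_const q).aestronglyMeasurable]
  tfae_have 2 → 3 := fun h ↦
    ⟨2, 3, by norm_num, by norm_num, by norm_num, h 2 two_pos, h 3 three_pos⟩
  tfae_have 3 → 1 := by
    rintro ⟨q₁, q₂, hq₁, hq₂, hq, e₁, e₂⟩
    have hint : ∀ q : ℝ, ∫ ω, W ω ^ q ∂ℙ = (b : ℝ) ^ (q - 1) → Integrable (fun ω ↦ W ω ^ q) ℙ :=
      fun q h ↦ .of_integral_ne_zero (by rw [h]; positivity)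
    refine map_eq_WTCdist hWmeas hb0 ?_ hWmean
    filter_upwards [ae_eq_zero_or_eq_of_integral_rpow_eq (c := b) (by positivity)
      (ae_of_all _ hW0) hq₁ hq₂ hq (.of_integral_ne_zero (by simp [hWmean])) (hint q₁ e₁)
      (hint q₂ e₂) (by rw [hWmean, mul_one, e₁]) (by rw [hWmean, mul_one, e₂])] with ω hω
    exact hω.symm
  tfae_finish
end
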